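/- arXiv:1601.03163 — 11 statements merged into one kernel-verified Lean document; each statement's English description precedes it below -/
import Mathlib

section
/- Let X, Y, Z be topological spaces and let f : X × Y → Z be quasicontinuous with respect to the first variable and continuous with respect to the second variable. Let W₀, W₁ be nonempty open subsets of Z such that f⁻¹(W₀) and f⁻¹(W₁) are both dense in X × Y. Then for every n ∈ ℕ, every family of nonempty open sets G₁, …, Gₙ ⊆ X and every θ₁, …, θₙ ∈ {0,1}, there exist a point y₀ ∈ Y and nonempty open sets U₁, …, Uₙ ⊆ X with Uₖ ⊆ Gₖ and f(x, y₀) ∈ W_{θₖ} for all x ∈ Uₖ and all 1 ≤ k ≤ n. -/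
/-- A map `f` is quasicontinuous if at every point `x₀`, for every neighborhood `U` of `x₀`
and every neighborhood `V` of `f x₀` there is a nonempty open `U₁ ⊆ U` with `f '' U₁ ⊆ V`. -/
def IsQuasicontinuous {X Z : Type*} [TopologicalSpace X] [TopologicalSpace Z]
    (f : X → Z) : Prop :=
  ∀ x₀ : X, ∀ U ∈ nhds x₀, ∀ V ∈ nhds (f x₀),
    ∃ U₁ : Set X, IsOpen U₁ ∧ U₁.Nonempty ∧ U₁ ⊆ U ∧ ∀ x ∈ U₁, f x ∈ V

theorem stmt0 {X Y Z : Type*} [TopologicalSpace X] [TopologicalSpace Y] [TopologicalSpace Z]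
    [Nonempty Y] (f : X × Y → Z)
    (hq : ∀ y : Y, IsQuasicontinuous fun x => f (x, y))
    (hc : ∀ x : X, Continuous fun y => f (x, y))
    (W : Fin 2 → Set Z) (hWopen : ∀ i, IsOpen (W i)) (hWne : ∀ i, (W i).Nonempty)
    (hWdense : ∀ i, Dense (f ⁻¹' (W i)))
    (n : ℕ) (G : Fin n → Set X) (hGopen : ∀ k, IsOpen (G k)) (hGne : ∀ k, (G k).Nonempty)
    (θ : Fin n → Fin 2) :
    ∃ (y₀ : Y) (U : Fin n → Set X), ∀ k, IsOpen (U k) ∧ (U k).Nonempty ∧ U k ⊆ G k ∧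
      ∀ x ∈ U k, f (x, y₀) ∈ W (θ k) := by
  classical
  have key : ∀ m : ℕ, m ≤ n → ∃ y₀ : Y, ∀ k : Fin n, (k : ℕ) < m →
      ∃ x ∈ G k, f (x, y₀) ∈ W (θ k) := by
    intro m
    induction m with
    | zero => intro _; exact ⟨Classical.arbitrary Y, fun k hk => absurd hk (by omega)⟩
    | succ m ih =>
      intro hm
      obtain ⟨y₀, hy₀⟩ := ih (Nat.le_of_succ_le hm)
      choose x hxG hxW using hy₀
      set O : Set Y := ⋂ (k : Fin n), ⋂ (hk : (k : ℕ) < m), {y | f (x k hk, y) ∈ W (θ k)}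
        with hO
      have hOopen : IsOpen O := isOpen_iInter_of_finite fun k =>
        isOpen_iInter_of_finite fun hk => (hWopen (θ k)).preimage (hc (x k hk))
      have hy₀O : y₀ ∈ O := by
        simp only [hO, Set.mem_iInter]
        intro k hk; exact hxW k hk
      set km : Fin n := ⟨m, hm⟩ with hkm
      obtain ⟨xg, hxg⟩ := hGne km
      have hne : ((G km ×ˢ O) ∩ f ⁻¹' (W (θ km))).Nonempty :=
        (hWdense (θ km)).inter_open_nonempty _ ((hGopen km).prod hOopen)
          ⟨(xg, y₀), hxg, hy₀O⟩
      obtain ⟨⟨x', y'⟩, ⟨hx'G, hy'O⟩, hx'W⟩ := hne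
      refine ⟨y', fun k hk => ?_⟩
      rcases Nat.lt_succ_iff_lt_or_eq.mp hk with h | h
      · refine ⟨x k h, hxG k h, ?_⟩
        simp only [hO, Set.mem_iInter] at hy'O
        exact hy'O k h
      · have : k = km := Fin.ext h
        subst this
        exact ⟨x', hx'G, hx'W⟩
  obtain ⟨y₀, hy₀⟩ := key n le_rfl
  have h : ∀ k : Fin n, ∃ U₁ : Set X, IsOpen U₁ ∧ U₁.Nonempty ∧ U₁ ⊆ G k ∧
      ∀ x ∈ U₁, f (x, y₀) ∈ W (θ k) := by
    intro k
    obtain ⟨x, hxG, hxW⟩ := hy₀ k k.isLt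
    exact hq y₀ x (G k) ((hGopen k).mem_nhds hxG) _ ((hWopen (θ k)).mem_nhds hxW)
  choose U h1 h2 h3 h4 using h
  exact ⟨y₀, U, fun k => ⟨h1 k, h2 k, h3 k, h4 k⟩⟩
end

section
/- Let X be an α-favorable space, let Y be a regular topological space in which every separable closed subset is compact, and let f : X × Y → ℝ be quasicontinuous in the first variable, continuous in the second variable, and jointly discontinuous at every point of X × Y. Then Y contains a compact subspace homeomorphic to the Stone–Čech compactification βℕ of the discrete space ℕ. -/
/-- `X` is α-favorable: the player α has a winning strategy in the Choquet game on `X`. -/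
def IsAlphaFavorable (X : Type*) [TopologicalSpace X] : Prop :=
  ∃ σ : List (Set X) → Set X,
    (∀ (l : List (Set X)) (U : Set X), IsOpen U → U.Nonempty →
        IsOpen (σ (U :: l)) ∧ (σ (U :: l)).Nonempty ∧ σ (U :: l) ⊆ U) ∧
    (∀ U : ℕ → Set X, (∀ n, IsOpen (U n)) → (∀ n, (U n).Nonempty) →
        (∀ n, U (n + 1) ⊆ σ (((List.range (n + 1)).reverse).map U)) →
        (⋂ n, U n).Nonempty)


section Aux
open TopologicalSpace Set Filter

lemma betaPart {Y : Type*} [TopologicalSpace Y] [T3Space Y]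
    (hY : ∀ F : Set Y, IsClosed F → TopologicalSpace.IsSeparable F → IsCompact F)
    (y : ℕ → Y) (a b : ℝ) (hab : a < b)
    (sep : ∀ A : Set ℕ, ∃ g : Y → ℝ, Continuous g ∧ (∀ m ∈ A, b ≤ g (y m)) ∧
      (∀ m ∉ A, g (y m) ≤ a)) :
    ∃ Y₀ : Set Y, IsCompact Y₀ ∧ Nonempty (Y₀ ≃ₜ Ultrafilter ℕ) := by
  classical
  set K : Set Y := closure (Set.range y) with hK
  have hKsep : TopologicalSpace.IsSeparable K :=
    ((Set.countable_range y).isSeparable).closure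
  have hKcomp : IsCompact K := hY K isClosed_closure hKsep
  haveI : CompactSpace ↥K := isCompact_iff_compactSpace.mp hKcomp
  set yK : ℕ → ↥K := fun n => ⟨y n, subset_closure ⟨n, rfl⟩⟩ with hyK
  set e : Ultrafilter ℕ → ↥K := Ultrafilter.extend yK with he
  have hecont : Continuous e := continuous_ultrafilter_extend yK
  -- e u lies in closure of yK '' A for A ∈ u
  have hmem : ∀ (u : Ultrafilter ℕ) (A : Set ℕ), A ∈ u → e u ∈ closure (yK '' A) := by
    intro u A hA
    have hle : ↑(Ultrafilter.map yK u) ≤ nhds (e u) := ultrafilter_extend_eq_iff.mp rfl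
    rw [mem_closure_iff_nhds]
    intro N hN
    have hN' : N ∈ Ultrafilter.map yK u := hle hN
    have h2 : yK ⁻¹' N ∈ u := hN'
    obtain ⟨m, hm⟩ := Ultrafilter.nonempty_of_mem (u.inter_mem h2 hA)
    exact ⟨yK m, hm.1, ⟨m, hm.2, rfl⟩⟩
  have hinj : Function.Injective e := by
    intro u v huv
    by_contra hne
    -- find A ∈ u with Aᶜ ∈ v
    have : ∃ A : Set ℕ, A ∈ u ∧ Aᶜ ∈ v := by
      by_contra hno
      push_neg at hno
      refine hne (Ultrafilter.eq_of_le ?_).symm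
      intro s hs
      by_contra hsv
      exact hno s hs (Ultrafilter.compl_mem_iff_notMem.mpr hsv)
    obtain ⟨A, hAu, hAv⟩ := this
    obtain ⟨g, hg, hgb, hga⟩ := sep A
    set G : ↥K → ℝ := fun z => g z.1 with hG
    have hGc : Continuous G := hg.comp continuous_subtype_val
    have h1 : b ≤ G (e u) := by
      have hcl : closure (yK '' A) ⊆ {z : ↥K | b ≤ G z} := by
        apply closure_minimal
        · rintro z ⟨m, hmA, rfl⟩
          exact hgb m hmA
        · exact IsClosed.preimage hGc isClosed_Ici
      exact hcl (hmem u A hAu)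
    have h2 : G (e v) ≤ a := by
      have hcl : closure (yK '' Aᶜ) ⊆ {z : ↥K | G z ≤ a} := by
        apply closure_minimal
        · rintro z ⟨m, hmA, rfl⟩
          exact hga m hmA
        · exact IsClosed.preimage hGc isClosed_Iic
      exact hcl (hmem v Aᶜ hAv)
    rw [huv] at h1
    linarith
  set E : Ultrafilter ℕ → Y := fun u => (e u).1 with hE
  have hEc : Continuous E := continuous_subtype_val.comp hecont
  have hEinj : Function.Injective E := fun u v huv => hinj (Subtype.ext huv)
  have hemb := (hEc.isClosedEmbedding hEinj).toIsEmbedding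
  exact ⟨Set.range E, isCompact_range hEc, ⟨hemb.toHomeomorph.symm⟩⟩

section LemB
variable {X Y : Type*} [TopologicalSpace X] [TopologicalSpace Y]

/-- One step of the construction in the game-Baire lemma. -/
lemma lemB_step [T3Space Y]
    (σ : List (Set X) → Set X)
    (hσ1 : ∀ (l : List (Set X)) (U : Set X), IsOpen U → U.Nonempty →
        IsOpen (σ (U :: l)) ∧ (σ (U :: l)).Nonempty ∧ σ (U :: l) ⊆ U)
    (F : ℕ → Set (X × Y)) (hF : ∀ n, IsClosed (F n))
    (O0 : Set X) (Q0 : Set Y)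
    (hcon : ∀ (n : ℕ) (O : Set X) (Q : Set Y), IsOpen O → IsOpen Q → O.Nonempty →
      Q.Nonempty → O ⊆ O0 → Q ⊆ Q0 → ¬(O ×ˢ Q ⊆ F n))
    (n : ℕ) (dO : ℕ → Set X) (dQ : ℕ → Set Y)
    (hOn : IsOpen (dO n) ∧ (dO n).Nonempty ∧ dO n ⊆ O0)
    (hQn : IsOpen (dQ n) ∧ (dQ n).Nonempty ∧ dQ n ⊆ Q0) :
    ∃ (O' : Set X) (Q' : Set Y) (y' : Y),
      IsOpen O' ∧ O'.Nonempty ∧ O' ⊆ O0 ∧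
      IsOpen Q' ∧ Q'.Nonempty ∧ Q' ⊆ Q0 ∧
      O' ⊆ σ (((List.range (n + 1)).reverse).map dO) ∧
      closure Q' ⊆ dQ n ∧ (O' ×ˢ Q') ∩ F n = ∅ ∧ y' ∈ Q' := by
  have hlist : ((List.range (n + 1)).reverse).map dO
      = dO n :: ((List.range n).reverse).map dO := by
    rw [List.range_succ, List.reverse_append]
    simp
  have hS := hσ1 (((List.range n).reverse).map dO) (dO n) hOn.1 hOn.2.1
  rw [← hlist] at hS
  set S := σ (((List.range (n + 1)).reverse).map dO) with hSdef
  obtain ⟨hSo, hSne, hSsub⟩ := hS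
  have hnot : ¬(S ×ˢ dQ n ⊆ F n) :=
    hcon n S (dQ n) hSo hQn.1 hSne hQn.2.1 (hSsub.trans hOn.2.2) hQn.2.2
  rw [Set.not_subset] at hnot
  obtain ⟨p, hpS, hpF⟩ := hnot
  obtain ⟨u, v, hu, hv, hpu, hpv, huv⟩ :=
    isOpen_prod_iff.mp (hF n).isOpen_compl p.1 p.2 hpF
  obtain ⟨t, htn, htc, hts⟩ :=
    exists_mem_nhds_isClosed_subset (x := p.2)
      ((hv.inter hQn.1).mem_nhds ⟨hpv, hpS.2⟩)
  refine ⟨u ∩ S, interior t, p.2, (hu.inter hSo), ⟨p.1, hpu, hpS.1⟩,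
    (inter_subset_right).trans (hSsub.trans hOn.2.2),
    isOpen_interior, ⟨p.2, mem_interior_iff_mem_nhds.mpr htn⟩,
    ?_, inter_subset_right, ?_, ?_, mem_interior_iff_mem_nhds.mpr htn⟩
  · exact (interior_subset.trans hts).trans ((inter_subset_right).trans hQn.2.2)
  · exact (closure_minimal interior_subset htc).trans (hts.trans inter_subset_right)
  · rw [Set.eq_empty_iff_forall_notMem]
    rintro q ⟨⟨hq1, hq2⟩, hqF⟩
    have : q ∈ u ×ˢ v := ⟨hq1.1, (interior_subset.trans hts) hq2 |>.1⟩
    exact huv this hqF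

/-- Game-theoretic Baire-type lemma for the product. -/
lemma lemB [T3Space Y]
    (hY : ∀ F : Set Y, IsClosed F → TopologicalSpace.IsSeparable F → IsCompact F)
    (σ : List (Set X) → Set X)
    (hσ1 : ∀ (l : List (Set X)) (U : Set X), IsOpen U → U.Nonempty →
        IsOpen (σ (U :: l)) ∧ (σ (U :: l)).Nonempty ∧ σ (U :: l) ⊆ U)
    (hσ2 : ∀ U : ℕ → Set X, (∀ n, IsOpen (U n)) → (∀ n, (U n).Nonempty) →
        (∀ n, U (n + 1) ⊆ σ (((List.range (n + 1)).reverse).map U)) →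
        (⋂ n, U n).Nonempty)
    (F : ℕ → Set (X × Y)) (hF : ∀ n, IsClosed (F n))
    (O0 : Set X) (Q0 : Set Y) (hO0 : IsOpen O0) (hQ0 : IsOpen Q0)
    (hO0ne : O0.Nonempty) (hQ0ne : Q0.Nonempty)
    (hcov : ∀ p : X × Y, p.1 ∈ O0 → p.2 ∈ Q0 → ∃ n, p ∈ F n) :
    ∃ (n : ℕ) (O : Set X) (Q : Set Y), IsOpen O ∧ IsOpen Q ∧ O.Nonempty ∧ Q.Nonempty ∧
      O ⊆ O0 ∧ Q ⊆ Q0 ∧ O ×ˢ Q ⊆ F n := by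
  classical
  by_contra hcon'
  push_neg at hcon'
  have hcon : ∀ (n : ℕ) (O : Set X) (Q : Set Y), IsOpen O → IsOpen Q → O.Nonempty →
      Q.Nonempty → O ⊆ O0 → Q ⊆ Q0 → ¬(O ×ˢ Q ⊆ F n) := by
    intro n O Q h1 h2 h3 h4 h5 h6
    exact hcon' n O Q h1 h2 h3 h4 h5 h6
  obtain ⟨y00⟩ : Nonempty Y := ⟨hQ0ne.choose⟩
  -- state: triple of functions
  -- Good predicate
  set Good : ℕ → ((ℕ → Set X) × (ℕ → Set Y) × (ℕ → Y)) → Prop :=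
    fun n d =>
      d.1 0 = O0 ∧ d.2.1 0 = Q0 ∧
      (∀ k, k ≤ n → IsOpen (d.1 k) ∧ (d.1 k).Nonempty ∧ d.1 k ⊆ O0) ∧
      (∀ k, k ≤ n → IsOpen (d.2.1 k) ∧ (d.2.1 k).Nonempty ∧ d.2.1 k ⊆ Q0) ∧
      (∀ k, k < n → (d.1 (k+1) ⊆ σ (((List.range (k + 1)).reverse).map d.1)) ∧
        closure (d.2.1 (k+1)) ⊆ d.2.1 k ∧ (d.1 (k+1) ×ˢ d.2.1 (k+1)) ∩ F k = ∅ ∧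
        d.2.2 (k+1) ∈ d.2.1 (k+1)) with hGood
  have hstep : ∀ n d, Good n d → ∃ d',
      (∀ k, k ≤ n → d'.1 k = d.1 k ∧ d'.2.1 k = d.2.1 k ∧ d'.2.2 k = d.2.2 k) ∧
      Good (n+1) d' := by
    intro n d hd
    obtain ⟨hd0, hd0', hdO, hdQ, hdrec⟩ := hd
    obtain ⟨O', Q', y', hO'o, hO'ne, hO'0, hQ'o, hQ'ne, hQ'0, hO'σ, hQ'cl, hbox, hy'⟩ :=
      lemB_step σ hσ1 F hF O0 Q0 hcon n d.1 d.2.1 (hdO n le_rfl) (hdQ n le_rfl)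
    refine ⟨⟨Function.update d.1 (n+1) O',
           Function.update d.2.1 (n+1) Q',
           Function.update d.2.2 (n+1) y'⟩, ?_, ?_⟩
    · intro k hk
      have hne : k ≠ n+1 := by omega
      exact ⟨Function.update_of_ne hne _ _, Function.update_of_ne hne _ _,
        Function.update_of_ne hne _ _⟩
    · rw [hGood]
      dsimp only
      have hmapeq : ∀ m, m ≤ n+1 → (((List.range m).reverse).map
          (Function.update d.1 (n+1) O')) = ((List.range m).reverse).map d.1 := by
        intro m hm
        apply List.map_congr_left
        intro i hi
        rw [List.mem_reverse, List.mem_range] at hi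
        exact Function.update_of_ne (by omega) _ _
      refine ⟨by rw [Function.update_of_ne (by omega : (0:ℕ) ≠ n+1)]; exact hd0,
        by rw [Function.update_of_ne (by omega : (0:ℕ) ≠ n+1)]; exact hd0', ?_, ?_, ?_⟩
      · intro k hk
        rcases Nat.lt_or_ge k (n+1) with h | h
        · rw [Function.update_of_ne (by omega : k ≠ n+1)]
          exact hdO k (by omega)
        · have : k = n+1 := by omega
          subst this
          rw [Function.update_self]
          exact ⟨hO'o, hO'ne, hO'0⟩
      · intro k hk
        rcases Nat.lt_or_ge k (n+1) with h | h
        · rw [Function.update_of_ne (by omega : k ≠ n+1)]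
          exact hdQ k (by omega)
        · have : k = n+1 := by omega
          subst this
          rw [Function.update_self]
          exact ⟨hQ'o, hQ'ne, hQ'0⟩
      · intro k hk
        rcases Nat.lt_or_ge k n with h | h
        · have hrec := hdrec k h
          rw [Function.update_of_ne (by omega : k+1 ≠ n+1),
            Function.update_of_ne (by omega : k+1 ≠ n+1),
            Function.update_of_ne (by omega : k ≠ n+1),
            Function.update_of_ne (by omega : k+1 ≠ n+1),
            hmapeq (k+1) (by omega)]
          exact hrec
        · have hkn : k = n := by omega
          subst hkn
          rw [Function.update_self, Function.update_self, Function.update_self,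
            Function.update_of_ne (by omega : k ≠ k+1), hmapeq (k+1) (by omega)]
          exact ⟨hO'σ, hQ'cl, hbox, hy'⟩
  -- iterate
  set st : ℕ → ((ℕ → Set X) × (ℕ → Set Y) × (ℕ → Y)) :=
    fun n => Nat.rec (⟨fun _ => O0, fun _ => Q0, fun _ => y00⟩)
      (fun k prev => if h : Good k prev then (hstep k prev h).choose else prev) n with hst
  have hst0 : Good 0 (st 0) := by
    refine ⟨rfl, rfl, ?_, ?_, ?_⟩
    · intro k hk; exact ⟨hO0, hO0ne, subset_rfl⟩
    · intro k hk; exact ⟨hQ0, hQ0ne, subset_rfl⟩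
    · intro k hk; omega
  have hstS : ∀ n, Good n (st n) := by
    intro n
    induction n with
    | zero => exact hst0
    | succ k ih =>
      have : st (k+1) = if h : Good k (st k) then (hstep k (st k) h).choose else st k := rfl
      rw [this, dif_pos ih]
      exact ((hstep k (st k) ih).choose_spec).2
  have hagree1 : ∀ n, ∀ k ≤ n, (st (n+1)).1 k = (st n).1 k ∧
      (st (n+1)).2.1 k = (st n).2.1 k ∧ (st (n+1)).2.2 k = (st n).2.2 k := by
    intro n k hk
    have : st (n+1) = if h : Good n (st n) then (hstep n (st n) h).choose else st n := rfl
    rw [this, dif_pos (hstS n)]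
    exact ((hstep n (st n) (hstS n)).choose_spec).1 k hk
  have hagree : ∀ m n, m ≤ n → ∀ k ≤ m, (st n).1 k = (st m).1 k ∧
      (st n).2.1 k = (st m).2.1 k ∧ (st n).2.2 k = (st m).2.2 k := by
    intro m n hmn
    induction n with
    | zero => intro k hk; have : m = 0 := by omega
              subst this; exact ⟨rfl, rfl, rfl⟩
    | succ j ih =>
      intro k hk
      rcases Nat.lt_or_ge m (j+1) with h | h
      · have h1 := hagree1 j k (by omega)
        have h2 := ih (by omega) k hk
        exact ⟨h1.1.trans h2.1, h1.2.1.trans h2.2.1, h1.2.2.trans h2.2.2⟩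
      · have : m = j + 1 := by omega
        subst this; exact ⟨rfl, rfl, rfl⟩
  set dO : ℕ → Set X := fun k => (st k).1 k with hdO
  set dQ : ℕ → Set Y := fun k => (st k).2.1 k with hdQ
  set dy : ℕ → Y := fun k => (st k).2.2 k with hdy
  have hdOk : ∀ k, IsOpen (dO k) ∧ (dO k).Nonempty ∧ dO k ⊆ O0 := by
    intro k; exact (hstS k).2.2.1 k le_rfl
  have hdQk : ∀ k, IsOpen (dQ k) ∧ (dQ k).Nonempty ∧ dQ k ⊆ Q0 := by
    intro k; exact (hstS k).2.2.2.1 k le_rfl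
  have hrec : ∀ k, (dO (k+1) ⊆ σ (((List.range (k + 1)).reverse).map dO)) ∧
      closure (dQ (k+1)) ⊆ dQ k ∧ (dO (k+1) ×ˢ dQ (k+1)) ∩ F k = ∅ ∧
      dy (k+1) ∈ dQ (k+1) := by
    intro k
    have h := (hstS (k+1)).2.2.2.2 k (by omega)
    have e1 : (st (k+1)).1 (k+1) = dO (k+1) := rfl
    have e2 : (st (k+1)).2.1 (k+1) = dQ (k+1) := rfl
    have e3 : (st (k+1)).2.1 k = dQ k := (hagree k (k+1) (by omega) k le_rfl).2.1
    have e4 : (st (k+1)).2.2 (k+1) = dy (k+1) := rfl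
    have e5 : (((List.range (k + 1)).reverse).map (st (k+1)).1)
        = ((List.range (k + 1)).reverse).map dO := by
      apply List.map_congr_left
      intro i hi
      rw [List.mem_reverse, List.mem_range] at hi
      exact (hagree i (k+1) (by omega) i le_rfl).1
    rw [e1, e2, e3, e4, e5] at h
    exact h
  -- x* from the strategy
  obtain ⟨xs, hxs⟩ := hσ2 dO (fun k => (hdOk k).1) (fun k => (hdOk k).2.1)
      (fun k => (hrec k).1)
  rw [Set.mem_iInter] at hxs
  -- Q are nested
  have hQnest : ∀ m n, n ≤ m → dQ m ⊆ dQ n := by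
    intro m
    induction m with
    | zero => intro n hn; have : n = 0 := by omega
              subst this; exact subset_rfl
    | succ j ih =>
      intro n hn
      rcases Nat.lt_or_ge n (j+1) with h | h
      · exact (subset_closure.trans (hrec j).2.1).trans (ih n (by omega))
      · have : n = j+1 := by omega
        subst this; exact subset_rfl
  -- cluster point of dy
  have hyK : ∀ k, dy (k+1) ∈ dQ (k+1) := fun k => (hrec k).2.2.2
  set K : Set Y := closure (Set.range dy) with hKdef
  have hKcomp : IsCompact K := hY K isClosed_closure ((Set.countable_range dy).isSeparable).closure
  have hle : Filter.map dy Filter.atTop ≤ Filter.principal K := by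
    rw [Filter.le_principal_iff]
    exact Filter.mem_map.mpr (Filter.Eventually.of_forall (fun k => subset_closure ⟨k, rfl⟩))
  obtain ⟨ys, hysK, hyscl⟩ := hKcomp.exists_clusterPt hle
  have hysQ : ∀ n, ys ∈ dQ n := by
    intro n
    have h1 : ys ∈ closure (dQ (n+1)) := by
      rw [mem_closure_iff_nhds]
      intro N hN
      have h2 : dy '' (Set.Ici (n+1)) ∈ Filter.map dy Filter.atTop := by
        rw [Filter.mem_map]
        filter_upwards [Filter.mem_atTop (n+1)] with m hm using ⟨m, hm, rfl⟩
      obtain ⟨z, hz1, hz2⟩ := clusterPt_iff_nonempty.mp hyscl hN h2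
      obtain ⟨m, hm, rfl⟩ := hz2
      refine ⟨dy m, hz1, ?_⟩
      rcases Nat.exists_eq_add_of_le hm with ⟨c, rfl⟩
      exact hQnest (n+1+c) (n+1) (by omega) (by
        rcases Nat.lt_or_ge 0 (n+1+c) with h | h
        · obtain ⟨j, hj⟩ : ∃ j, n+1+c = j+1 := ⟨n+c, by omega⟩
          rw [hj]; rw [hj]at *; exact hyK j
        · omega)
    exact ((hrec n).2.1) h1
  -- contradiction
  obtain ⟨n, hn⟩ := hcov (xs, ys) (by
      have := hxs 0
      have h0 : dO 0 = O0 := (hstS 0).1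
      rwa [h0] at this)
    (by
      have := hysQ 0
      have h0 : dQ 0 = Q0 := (hstS 0).2.1
      rwa [h0] at this)
  have : (xs, ys) ∈ (dO (n+1) ×ˢ dQ (n+1)) ∩ F n :=
    ⟨⟨hxs (n+1), hysQ (n+1)⟩, hn⟩
  rw [(hrec n).2.2.1] at this
  exact this


end LemB

section Main
variable {X Y : Type*} [TopologicalSpace X] [TopologicalSpace Y]

/-- The "good setup" structure extracted from a nowhere continuous function. -/
def GoodSetup (F : X × Y → ℝ) (Os : Set X) (Qs : Set Y) (c eps w : ℝ) : Prop :=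
  IsOpen Os ∧ Os.Nonempty ∧ IsOpen Qs ∧ Qs.Nonempty ∧ 0 < w ∧ 5*w < eps ∧
  ∀ Gx : Set X, ∀ Gy : Set Y, IsOpen Gx → IsOpen Gy → Gx.Nonempty → Gy.Nonempty →
    Gx ⊆ Os → Gy ⊆ Qs →
    (∃ p : X × Y, p.1 ∈ Gx ∧ p.2 ∈ Gy ∧ c ≤ F p ∧ F p ≤ c + w) ∧
    (∃ q : X × Y, q.1 ∈ Gx ∧ q.2 ∈ Gy ∧ c + eps ≤ F q)

lemma tails_decomp (t : List Bool) : ∃ r, t.tails = t :: r := by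
  cases t with
  | nil => exact ⟨[], by simp⟩
  | cons a l => exact ⟨l.tails, by simp⟩

/-- The chain lemma: a single `y` serving finitely many open sets. -/
lemma chainLem {F : X × Y → ℝ} {Os : Set X} {Qs : Set Y} {c eps w : ℝ}
    (hcY : ∀ x : X, Continuous fun y => F (x, y))
    (GS : GoodSetup F Os Qs c eps w) :
    ∀ ts : List (Set X), (∀ T ∈ ts, IsOpen T ∧ T.Nonempty ∧ T ⊆ Os) →
    ∃ Θ : Set Y, IsOpen Θ ∧ Θ.Nonempty ∧ Θ ⊆ Qs ∧
      ∀ T ∈ ts, ∃ h u : X, h ∈ T ∧ u ∈ T ∧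
        ∀ y ∈ Θ, (c + eps - w < F (h, y) ∧ F (u, y) < c + 2*w) := by
  obtain ⟨hOso, hOsne, hQso, hQsne, hw, hweps, hdens⟩ := GS
  intro ts
  induction ts with
  | nil => exact fun _ => ⟨Qs, hQso, hQsne, subset_rfl, by simp⟩
  | cons T ts ih =>
    intro hts
    obtain ⟨Θ', hΘ'o, hΘ'ne, hΘ'Qs, hmem⟩ := ih (fun T' hT' => hts T' (List.mem_cons_of_mem _ hT'))
    obtain ⟨hTo, hTne, hTOs⟩ := hts T List.mem_cons_self
    -- high point
    obtain ⟨-, q, hq1, hq2, hqv⟩ := hdens T Θ' hTo hΘ'o hTne hΘ'ne hTOs hΘ'Qs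
    set Θ'' : Set Y := Θ' ∩ {y | c + eps - w < F (q.1, y)} with hΘ''def
    have hΘ''o : IsOpen Θ'' := hΘ'o.inter ((isOpen_Ioi).preimage (hcY q.1))
    have hΘ''ne : Θ''.Nonempty := ⟨q.2, hq2, by simp only [mem_setOf_eq]; rw [Prod.mk.eta]; linarith⟩
    -- low point
    obtain ⟨⟨p, hp1, hp2, hpv1, hpv2⟩, -⟩ :=
      hdens T Θ'' hTo hΘ''o hTne hΘ''ne hTOs ((inter_subset_left).trans hΘ'Qs)
    set ΘN : Set Y := Θ'' ∩ {y | F (p.1, y) < c + 2*w} with hΘNdef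
    have hΘNo : IsOpen ΘN := hΘ''o.inter ((isOpen_Iio).preimage (hcY p.1))
    have hΘNne : ΘN.Nonempty := ⟨p.2, hp2, by simp only [mem_setOf_eq]; rw [Prod.mk.eta]; linarith⟩
    refine ⟨ΘN, hΘNo, hΘNne, ((inter_subset_left).trans inter_subset_left).trans hΘ'Qs, ?_⟩
    intro T' hT'
    rcases List.mem_cons.mp hT' with rfl | hT'
    · exact ⟨q.1, p.1, hq1, hp1, fun y hy => ⟨hy.1.2, hy.2⟩⟩
    · obtain ⟨h, u, hh, hu, hval⟩ := hmem T' hT'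
      exact ⟨h, u, hh, hu, fun y hy => hval y (hy.1.1)⟩

/-- All lists of booleans of a given length. -/
def allL : ℕ → List (List Bool)
  | 0 => [[]]
  | n+1 => ((allL n).map (true :: ·)) ++ ((allL n).map (false :: ·))

lemma mem_allL_of_len : ∀ n (t : List Bool), t.length = n → t ∈ allL n := by
  intro n
  induction n with
  | zero => intro t ht; rw [List.length_eq_zero_iff] at ht; subst ht; simp [allL]
  | succ k ih =>
    intro t ht
    cases t with
    | nil => simp at ht
    | cons b t' =>
      have ht' : t'.length = k := by simpa using ht
      cases b
      · exact List.mem_append_right _ (List.mem_map.mpr ⟨t', ih t' ht', rfl⟩)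
      · exact List.mem_append_left _ (List.mem_map.mpr ⟨t', ih t' ht', rfl⟩)

lemma len_of_mem_allL : ∀ n (t : List Bool), t ∈ allL n → t.length = n := by
  intro n
  induction n with
  | zero => intro t ht; simp [allL] at ht; subst ht; rfl
  | succ k ih =>
    intro t ht
    simp only [allL, List.mem_append, List.mem_map] at ht
    rcases ht with ⟨t', ht', rfl⟩ | ⟨t', ht', rfl⟩ <;> simp [ih t' ht']

/-- The invariant for the tree construction. -/
def GoodState (σ : List (Set X) → Set X) (F : X × Y → ℝ) (Os : Set X) (c eps w : ℝ)
    (n : ℕ) (m : List Bool → Set X) (ys : ℕ → Y) : Prop :=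
  m [] = Os ∧
  (∀ s : List Bool, s.length ≤ n → IsOpen (m s) ∧ (m s).Nonempty ∧ m s ⊆ Os) ∧
  (∀ (b : Bool) (t : List Bool), (b :: t).length ≤ n →
    (m (b :: t) ⊆ σ ((t.tails).map m)) ∧
    (∀ x ∈ m (b :: t),
      if b then c + eps - 2*w ≤ F (x, ys t.length) else F (x, ys t.length) ≤ c + 3*w))

lemma stepLem {σ : List (Set X) → Set X}
    (hσ1 : ∀ (l : List (Set X)) (U : Set X), IsOpen U → U.Nonempty →
        IsOpen (σ (U :: l)) ∧ (σ (U :: l)).Nonempty ∧ σ (U :: l) ⊆ U)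
    {F : X × Y → ℝ} {Os : Set X} {Qs : Set Y} {c eps w : ℝ}
    (hq : ∀ y : Y, IsQuasicontinuous fun x => F (x, y))
    (hcY : ∀ x : X, Continuous fun y => F (x, y))
    (GS : GoodSetup F Os Qs c eps w)
    (n : ℕ) (m : List Bool → Set X) (ys : ℕ → Y)
    (hGS : GoodState σ F Os c eps w n m ys) :
    ∃ (m' : List Bool → Set X) (ys' : ℕ → Y),
      (∀ s : List Bool, s.length ≤ n → m' s = m s) ∧
      (∀ k, k < n → ys' k = ys k) ∧
      GoodState σ F Os c eps w (n+1) m' ys' := by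
  classical
  obtain ⟨hm0, hms, hmc⟩ := hGS
  have hw : 0 < w := GS.2.2.2.2.1
  have hweps : 5*w < eps := GS.2.2.2.2.2.1
  -- the σ-responses at level n
  have hresp : ∀ t : List Bool, t.length = n →
      IsOpen (σ ((t.tails).map m)) ∧ (σ ((t.tails).map m)).Nonempty ∧
      σ ((t.tails).map m) ⊆ m t := by
    intro t ht
    obtain ⟨r, hr⟩ := tails_decomp t
    have hmt := hms t (by omega)
    have := hσ1 (r.map m) (m t) hmt.1 hmt.2.1
    rw [hr, List.map_cons]
    exact this
  set ts : List (Set X) := (allL n).map (fun t => σ ((t.tails).map m)) with hts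
  have htsp : ∀ T ∈ ts, IsOpen T ∧ T.Nonempty ∧ T ⊆ Os := by
    intro T hT
    obtain ⟨t, htmem, rfl⟩ := List.mem_map.mp hT
    have hlen := len_of_mem_allL n t htmem
    obtain ⟨h1, h2, h3⟩ := hresp t hlen
    exact ⟨h1, h2, h3.trans (hms t (by omega)).2.2⟩
  obtain ⟨Θ, hΘo, hΘne, hΘQs, hmem⟩ := chainLem hcY GS ts htsp
  obtain ⟨ystar, hystar⟩ := hΘne
  -- children via quasicontinuity
  have hch : ∀ t : List Bool, ∃ CH CL : Set X, t.length = n →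
      (IsOpen CH ∧ CH.Nonempty ∧ CH ⊆ σ ((t.tails).map m) ∧
        ∀ x ∈ CH, c + eps - 2*w ≤ F (x, ystar)) ∧
      (IsOpen CL ∧ CL.Nonempty ∧ CL ⊆ σ ((t.tails).map m) ∧
        ∀ x ∈ CL, F (x, ystar) ≤ c + 3*w) := by
    intro t
    by_cases ht : t.length = n
    · have hTmem : σ ((t.tails).map m) ∈ ts :=
        List.mem_map.mpr ⟨t, mem_allL_of_len n t ht, rfl⟩
      obtain ⟨h, u, hh, hu, hval⟩ := hmem _ hTmem
      have hvy := hval ystar hystar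
      obtain ⟨hTo, hTne, -⟩ := htsp _ hTmem
      obtain ⟨U1, hU1o, hU1ne, hU1s, hU1v⟩ :=
        hq ystar h (σ ((t.tails).map m)) (hTo.mem_nhds hh)
          (Set.Ioi (c + eps - 2*w)) (isOpen_Ioi.mem_nhds (by simp only [mem_Ioi]; linarith [hvy.1]))
      obtain ⟨U2, hU2o, hU2ne, hU2s, hU2v⟩ :=
        hq ystar u (σ ((t.tails).map m)) (hTo.mem_nhds hu)
          (Set.Iio (c + 3*w)) (isOpen_Iio.mem_nhds (by simp only [mem_Iio]; linarith [hvy.2]))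
      refine ⟨U1, U2, fun _ => ⟨⟨hU1o, hU1ne, hU1s, fun x hx => le_of_lt (hU1v x hx)⟩,
        ⟨hU2o, hU2ne, hU2s, fun x hx => le_of_lt (hU2v x hx)⟩⟩⟩
    · exact ⟨∅, ∅, fun h => absurd h ht⟩
  choose CH CL hCHL using hch
  set m' : List Bool → Set X := fun s =>
    match s with
    | [] => m []
    | b :: t => if t.length = n then (if b then CH t else CL t) else m (b :: t) with hm'
  set ys' : ℕ → Y := Function.update ys n ystar with hys'
  have hagree : ∀ s : List Bool, s.length ≤ n → m' s = m s := by
    intro s hs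
    cases s with
    | nil => rfl
    | cons b t =>
      have : t.length ≠ n := by simp at hs; omega
      simp only [hm', if_neg this]
  refine ⟨m', ys', hagree, fun k hk => Function.update_of_ne (by omega) _ _, ?_, ?_, ?_⟩
  · rw [hagree [] (by simp)]; exact hm0
  · intro s hs
    rcases Nat.lt_or_ge s.length (n+1) with h | h
    · rw [hagree s (by omega)]
      exact hms s (by omega)
    · have hlen : s.length = n + 1 := by omega
      cases s with
      | nil => simp at hlen
      | cons b t =>
        have ht : t.length = n := by simpa using hlen
        have hsub : (if b then CH t else CL t) ⊆ m t := by
          cases b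
          · simp only [if_false, Bool.false_eq_true]
            exact ((hCHL t ht).2.2.2.1).trans (hresp t ht).2.2
          · simp only [if_true]
            exact ((hCHL t ht).1.2.2.1).trans (hresp t ht).2.2
        have : m' (b :: t) = if b then CH t else CL t := by simp only [hm', if_pos ht]
        rw [this]
        cases b
        · simp only [Bool.false_eq_true, if_false]
          refine ⟨(hCHL t ht).2.1, (hCHL t ht).2.2.1, ?_⟩
          have hsub' : CL t ⊆ m t := by simpa using hsub
          exact hsub'.trans (hms t (by omega)).2.2
        · simp only [if_true]
          refine ⟨(hCHL t ht).1.1, (hCHL t ht).1.2.1, ?_⟩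
          have hsub' : CH t ⊆ m t := by simpa using hsub
          exact hsub'.trans (hms t (by omega)).2.2
  · intro b t hbt
    have hmapeq : (t.tails).map m' = (t.tails).map m := by
      apply List.map_congr_left
      intro u hu
      have hule : u.length ≤ t.length := (List.mem_tails _ _ |>.mp hu).length_le
      have htle : t.length ≤ n := by simp at hbt; omega
      exact hagree u (by omega)
    rcases Nat.lt_or_ge (b :: t).length (n+1) with h | h
    · have h1 : (b :: t).length ≤ n := by omega
      have h2 : t.length < n := by simp at h1 ⊢; omega
      rw [hagree _ h1, hmapeq]
      refine ⟨(hmc b t h1).1, ?_⟩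
      have : ys' t.length = ys t.length := Function.update_of_ne (by omega) _ _
      rw [this]
      exact (hmc b t h1).2
    · have hlen : (b :: t).length = n + 1 := by omega
      have ht : t.length = n := by simpa using hlen
      have hm'bt : m' (b :: t) = if b then CH t else CL t := by simp only [hm', if_pos ht]
      have hysn : ys' t.length = ystar := by rw [ht]; exact Function.update_self _ _ _
      rw [hm'bt, hmapeq, hysn]
      cases b
      · simp only [Bool.false_eq_true, if_false]
        exact ⟨(hCHL t ht).2.2.2.1, fun x hx => (hCHL t ht).2.2.2.2 x hx⟩
      · simp only [if_true]
        exact ⟨(hCHL t ht).1.2.2.1, fun x hx => (hCHL t ht).1.2.2.2 x hx⟩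

def blA (χ : ℕ → Bool) : ℕ → List Bool
  | 0 => []
  | k+1 => χ k :: blA χ k

lemma blA_len (χ : ℕ → Bool) : ∀ k, (blA χ k).length = k := by
  intro k
  induction k with
  | zero => rfl
  | succ j ih => simp [blA, ih]

lemma blA_tails (χ : ℕ → Bool) : ∀ k, (blA χ k).tails = ((List.range (k+1)).reverse).map (blA χ) := by
  intro k
  induction k with
  | zero => simp [blA, List.range_succ]
  | succ j ih =>
    show (χ j :: blA χ j).tails = _
    rw [List.tails_cons, List.range_succ, List.reverse_append]
    simp only [List.reverse_cons, List.reverse_nil, List.nil_append, List.singleton_append,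
      List.map_cons]
    rw [ih]
    rfl

lemma mainCons [T3Space Y]
    (hY : ∀ F : Set Y, IsClosed F → TopologicalSpace.IsSeparable F → IsCompact F)
    {σ : List (Set X) → Set X}
    (hσ1 : ∀ (l : List (Set X)) (U : Set X), IsOpen U → U.Nonempty →
        IsOpen (σ (U :: l)) ∧ (σ (U :: l)).Nonempty ∧ σ (U :: l) ⊆ U)
    (hσ2 : ∀ U : ℕ → Set X, (∀ n, IsOpen (U n)) → (∀ n, (U n).Nonempty) →
        (∀ n, U (n + 1) ⊆ σ (((List.range (n + 1)).reverse).map U)) →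
        (⋂ n, U n).Nonempty)
    {F : X × Y → ℝ} {Os : Set X} {Qs : Set Y} {c eps w : ℝ}
    (hq : ∀ y : Y, IsQuasicontinuous fun x => F (x, y))
    (hcY : ∀ x : X, Continuous fun y => F (x, y))
    (GS : GoodSetup F Os Qs c eps w) :
    ∃ Y₀ : Set Y, IsCompact Y₀ ∧ Nonempty (Y₀ ≃ₜ Ultrafilter ℕ) := by
  classical
  have hw : 0 < w := GS.2.2.2.2.1
  have hweps : 5*w < eps := GS.2.2.2.2.2.1
  have hOso : IsOpen Os := GS.1
  have hOsne : Os.Nonempty := GS.2.1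
  have y00 : Y := GS.2.2.2.1.some
  -- iterate the step lemma
  set st : ℕ → ((List Bool → Set X) × (ℕ → Y)) :=
    fun n => Nat.rec (⟨fun _ => Os, fun _ => y00⟩ : (List Bool → Set X) × (ℕ → Y))
      (fun k prev => if h : GoodState σ F Os c eps w k prev.1 prev.2 then
        ⟨(stepLem hσ1 hq hcY GS k prev.1 prev.2 h).choose,
         (stepLem hσ1 hq hcY GS k prev.1 prev.2 h).choose_spec.choose⟩
        else prev) n with hst
  have hGS0 : GoodState σ F Os c eps w 0 (st 0).1 (st 0).2 := by
    refine ⟨rfl, fun s _ => ⟨hOso, hOsne, subset_rfl⟩, ?_⟩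
    intro b t hbt
    exact absurd hbt (by simp)
  have hstS : ∀ n, GoodState σ F Os c eps w n (st n).1 (st n).2 := by
    intro n
    induction n with
    | zero => exact hGS0
    | succ k ih =>
      have hrw : st (k+1) = if h : GoodState σ F Os c eps w k (st k).1 (st k).2 then
        ⟨(stepLem hσ1 hq hcY GS k (st k).1 (st k).2 h).choose,
         (stepLem hσ1 hq hcY GS k (st k).1 (st k).2 h).choose_spec.choose⟩
        else st k := rfl
      rw [hrw, dif_pos ih]
      exact (stepLem hσ1 hq hcY GS k (st k).1 (st k).2 ih).choose_spec.choose_spec.2.2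
  have hagree1 : ∀ n, (∀ s : List Bool, s.length ≤ n → (st (n+1)).1 s = (st n).1 s) ∧
      (∀ k, k < n → (st (n+1)).2 k = (st n).2 k) := by
    intro n
    have hrw : st (n+1) = if h : GoodState σ F Os c eps w n (st n).1 (st n).2 then
      ⟨(stepLem hσ1 hq hcY GS n (st n).1 (st n).2 h).choose,
       (stepLem hσ1 hq hcY GS n (st n).1 (st n).2 h).choose_spec.choose⟩
      else st n := rfl
    rw [hrw, dif_pos (hstS n)]
    have hspec := (stepLem hσ1 hq hcY GS n (st n).1 (st n).2 (hstS n)).choose_spec.choose_spec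
    exact ⟨hspec.1, hspec.2.1⟩
  have hagree : ∀ m n, m ≤ n → (∀ s : List Bool, s.length ≤ m → (st n).1 s = (st m).1 s) ∧
      (∀ k, k < m → (st n).2 k = (st m).2 k) := by
    intro m n hmn
    induction n with
    | zero =>
      have : m = 0 := by omega
      subst this; exact ⟨fun _ _ => rfl, fun _ _ => rfl⟩
    | succ j ih =>
      rcases Nat.lt_or_ge m (j+1) with h | h
      · have h1 := hagree1 j
        have h2 := ih (by omega)
        exact ⟨fun s hs => (h1.1 s (by omega)).trans (h2.1 s hs),
          fun k hk => (h1.2 k (by omega)).trans (h2.2 k hk)⟩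
      · have : m = j + 1 := by omega
        subst this; exact ⟨fun _ _ => rfl, fun _ _ => rfl⟩
  set Node : List Bool → Set X := fun s => (st s.length).1 s with hNode
  set yy : ℕ → Y := fun k => (st (k+1)).2 k with hyy
  have hNodeP : ∀ s : List Bool, IsOpen (Node s) ∧ (Node s).Nonempty ∧ Node s ⊆ Os :=
    fun s => (hstS s.length).2.1 s le_rfl
  have hNodeC : ∀ (b : Bool) (t : List Bool),
      (Node (b :: t) ⊆ σ ((t.tails).map Node)) ∧
      (∀ x ∈ Node (b :: t),
        if b then c + eps - 2*w ≤ F (x, yy t.length) else F (x, yy t.length) ≤ c + 3*w) := by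
    intro b t
    have hcons := (hstS (t.length+1)).2.2 b t (by simp)
    have e2 : ((t.tails).map (st (t.length+1)).1) = (t.tails).map Node := by
      apply List.map_congr_left
      intro u hu
      have hule : u.length ≤ t.length := (List.mem_tails _ _ |>.mp hu).length_le
      exact (hagree u.length (t.length+1) (by omega)).1 u le_rfl
    rw [e2] at hcons
    exact hcons
  -- branches
  have hbranch : ∀ A : Set ℕ, ∃ xA : X, ∀ k : ℕ,
      (k ∈ A → c + eps - 2*w ≤ F (xA, yy k)) ∧ (k ∉ A → F (xA, yy k) ≤ c + 3*w) := by
    intro A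
    have hdec : DecidablePred (· ∈ A) := fun _ => Classical.propDecidable _
    set χ : ℕ → Bool := fun k => @decide (k ∈ A) (hdec k) with hχ
    have hUσ : ∀ k, Node (blA χ (k+1)) ⊆
        σ (((List.range (k + 1)).reverse).map (fun j => Node (blA χ j))) := by
      intro k
      have h1 := (hNodeC (χ k) (blA χ k)).1
      have heq : ((blA χ k).tails).map Node
          = ((List.range (k + 1)).reverse).map (fun j => Node (blA χ j)) := by
        rw [blA_tails, List.map_map]
        rfl
      rw [heq] at h1
      exact h1
    obtain ⟨xA, hxA⟩ := hσ2 (fun k => Node (blA χ k)) (fun k => (hNodeP _).1)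
      (fun k => (hNodeP _).2.1) hUσ
    rw [Set.mem_iInter] at hxA
    refine ⟨xA, fun k => ⟨?_, ?_⟩⟩
    · intro hk
      have hmem : xA ∈ Node (χ k :: blA χ k) := hxA (k+1)
      have h1 := (hNodeC (χ k) (blA χ k)).2 xA hmem
      rw [blA_len] at h1
      have hχk : χ k = true := by simp [hχ, hk]
      rw [hχk] at h1
      simpa using h1
    · intro hk
      have hmem : xA ∈ Node (χ k :: blA χ k) := hxA (k+1)
      have h1 := (hNodeC (χ k) (blA χ k)).2 xA hmem
      rw [blA_len] at h1
      have hχk : χ k = false := by simp [hχ, hk]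
      rw [hχk] at h1
      simpa using h1
  -- apply betaPart
  have hab : c + 3*w < c + eps - 2*w := by linarith
  apply betaPart hY yy (c + 3*w) (c + eps - 2*w) hab
  intro A
  obtain ⟨xA, hxA⟩ := hbranch A
  exact ⟨fun z => F (xA, z), hcY xA, fun k hk => (hxA k).1 hk, fun k hk => (hxA k).2 hk⟩

end Main

section Red
variable {X Y : Type*} [TopologicalSpace X] [TopologicalSpace Y]

lemma listDense : ∀ (L : List (Set (X × Y))) (Ox : Set X) (Qy : Set Y),
    IsOpen Ox → IsOpen Qy → Ox.Nonempty → Qy.Nonempty →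
    (∀ p : X × Y, p.1 ∈ Ox → p.2 ∈ Qy → ∃ S ∈ L, p ∈ S) →
    ∃ S ∈ L, ∃ Ox' Qy', IsOpen Ox' ∧ IsOpen Qy' ∧ Ox'.Nonempty ∧ Qy'.Nonempty ∧
      Ox' ⊆ Ox ∧ Qy' ⊆ Qy ∧
      ∀ Gx Gy, IsOpen Gx → IsOpen Gy → Gx.Nonempty → Gy.Nonempty → Gx ⊆ Ox' → Gy ⊆ Qy' →
        ∃ p ∈ S, p.1 ∈ Gx ∧ p.2 ∈ Gy := by
  intro L
  induction L with
  | nil =>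
    intro Ox Qy _ _ hne hne' hcov
    obtain ⟨x, hx⟩ := hne
    obtain ⟨y, hy⟩ := hne'
    obtain ⟨S, hS, -⟩ := hcov (x, y) hx hy
    exact absurd hS List.not_mem_nil
  | cons S L ih =>
    intro Ox Qy hOx hQy hne hne' hcov
    by_cases hd : ∀ Gx Gy, IsOpen Gx → IsOpen Gy → Gx.Nonempty → Gy.Nonempty →
        Gx ⊆ Ox → Gy ⊆ Qy → ∃ p ∈ S, p.1 ∈ Gx ∧ p.2 ∈ Gy
    · exact ⟨S, List.mem_cons_self, Ox, Qy, hOx, hQy, hne, hne',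
        subset_rfl, subset_rfl, hd⟩
    · push_neg at hd
      obtain ⟨Gx, Gy, hGx, hGy, hGxne, hGyne, hGxs, hGys, hnone⟩ := hd
      have hcov' : ∀ p : X × Y, p.1 ∈ Gx → p.2 ∈ Gy → ∃ S' ∈ L, p ∈ S' := by
        intro p hp1 hp2
        obtain ⟨S', hS', hpS'⟩ := hcov p (hGxs hp1) (hGys hp2)
        rcases List.mem_cons.mp hS' with rfl | hS'
        · exact absurd hp2 (hnone p hpS' hp1)
        · exact ⟨S', hS', hpS'⟩
      obtain ⟨S', hS', Ox', Qy', h1, h2, h3, h4, h5, h6, h7⟩ :=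
        ih Gx Gy hGx hGy hGxne hGyne hcov'
      exact ⟨S', List.mem_cons_of_mem _ hS', Ox', Qy', h1, h2, h3, h4,
        h5.trans hGxs, h6.trans hGys, h7⟩

/-- oscillation sets -/
def Cset (F : X × Y → ℝ) (n : ℕ) : Set (X × Y) :=
  {p | ∀ N : Set (X × Y), IsOpen N → p ∈ N →
    ∃ q ∈ N, ∃ q' ∈ N, 1/((n:ℝ)+1) ≤ |F q - F q'|}

lemma Cset_closed (F : X × Y → ℝ) (n : ℕ) : IsClosed (Cset F n) := by
  rw [← isOpen_compl_iff]
  rw [isOpen_iff_forall_mem_open]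
  intro p hp
  simp only [Cset, mem_compl_iff, mem_setOf_eq] at hp
  push_neg at hp
  obtain ⟨N, hNo, hpN, hno⟩ := hp
  refine ⟨N, ?_, hNo, hpN⟩
  intro p' hp'
  simp only [Cset, mem_compl_iff, mem_setOf_eq]
  push_neg
  exact ⟨N, hNo, hp', hno⟩

lemma Cset_cover (F : X × Y → ℝ) (hdisc : ∀ p : X × Y, ¬ ContinuousAt F p) :
    ∀ p : X × Y, ∃ n : ℕ, p ∈ Cset F n := by
  intro p
  have hnc : ¬ Filter.Tendsto F (nhds p) (nhds (F p)) := hdisc p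
  rw [Metric.tendsto_nhds] at hnc
  push_neg at hnc
  obtain ⟨ε, hε, hfreq⟩ := hnc
  obtain ⟨n, hn⟩ := exists_nat_one_div_lt hε
  refine ⟨n, ?_⟩
  intro N hNo hpN
  obtain ⟨q, hqN, hq⟩ := Filter.frequently_iff.mp hfreq (hNo.mem_nhds hpN)
  refine ⟨q, hqN, p, hpN, ?_⟩
  rw [Real.dist_eq] at hq
  linarith

end Red

section Red2
variable {X Y : Type*} [TopologicalSpace X] [TopologicalSpace Y]

lemma exists_goodSetup [Nonempty X] [Nonempty Y]
    (F : X × Y → ℝ) (hFb : ∀ p, |F p| ≤ 2)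
    (n1 : ℕ) (O1 : Set X) (Q1 : Set Y) (hO1o : IsOpen O1) (hQ1o : IsOpen Q1)
    (hO1ne : O1.Nonempty) (hQ1ne : Q1.Nonempty)
    (hbox : O1 ×ˢ Q1 ⊆ Cset F n1)
    (listDense : ∀ (L : List (Set (X × Y))) (Ox : Set X) (Qy : Set Y),
      IsOpen Ox → IsOpen Qy → Ox.Nonempty → Qy.Nonempty →
      (∀ p : X × Y, p.1 ∈ Ox → p.2 ∈ Qy → ∃ S ∈ L, p ∈ S) →
      ∃ S ∈ L, ∃ Ox' Qy', IsOpen Ox' ∧ IsOpen Qy' ∧ Ox'.Nonempty ∧ Qy'.Nonempty ∧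
        Ox' ⊆ Ox ∧ Qy' ⊆ Qy ∧
        ∀ Gx Gy, IsOpen Gx → IsOpen Gy → Gx.Nonempty → Gy.Nonempty → Gx ⊆ Ox' → Gy ⊆ Qy' →
          ∃ p ∈ S, p.1 ∈ Gx ∧ p.2 ∈ Gy) :
    ∃ (g : X × Y → ℝ) (Os : Set X) (Qs : Set Y) (c eps w : ℝ),
      (g = F ∨ g = fun p => -F p) ∧ GoodSetup g Os Qs c eps w := by
  classical
  set e2 : ℝ := 1/((n1:ℝ)+1) with he2
  have he2pos : 0 < e2 := by positivity
  set eps : ℝ := e2/2 with heps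
  have hepspos : 0 < eps := by positivity
  set w : ℝ := eps/100 with hwdef
  have hwpos : 0 < w := by positivity
  have h5w : 5*w < eps := by rw [hwdef]; linarith
  -- dichotomy
  set UpP : Set (X × Y) := {p | ∀ Gx : Set X, ∀ Gy : Set Y, IsOpen Gx → IsOpen Gy →
      p.1 ∈ Gx → p.2 ∈ Gy → ∃ q : X × Y, q.1 ∈ Gx ∧ q.2 ∈ Gy ∧ F p + eps ≤ F q} with hUpP
  set DnP : Set (X × Y) := {p | ∀ Gx : Set X, ∀ Gy : Set Y, IsOpen Gx → IsOpen Gy →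
      p.1 ∈ Gx → p.2 ∈ Gy → ∃ q : X × Y, q.1 ∈ Gx ∧ q.2 ∈ Gy ∧ F q ≤ F p - eps} with hDnP
  have hdich : ∀ p : X × Y, p ∈ Cset F n1 → p ∈ UpP ∨ p ∈ DnP := by
    intro p hp
    by_cases hup : p ∈ UpP
    · exact Or.inl hup
    · right
      rw [hUpP, mem_setOf_eq] at hup
      push_neg at hup
      obtain ⟨Nx, Ny, hNxo, hNyo, hpNx, hpNy, hno⟩ := hup
      intro Mx My hMxo hMyo hpMx hpMy
      have hNo : IsOpen ((Mx ∩ Nx) ×ˢ (My ∩ Ny)) := (hMxo.inter hNxo).prod (hMyo.inter hNyo)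
      obtain ⟨q, hq, q', hq', hgap⟩ := hp _ hNo ⟨⟨hpMx, hpNx⟩, ⟨hpMy, hpNy⟩⟩
      have hdev : eps ≤ |F q - F p| ∨ eps ≤ |F q' - F p| := by
        by_contra hcon
        push_neg at hcon
        have h1 : |F q - F q'| ≤ |F q - F p| + |F q' - F p| := by
          have := abs_sub_le (F q) (F p) (F q')
          rw [abs_sub_comm (F p) (F q')] at this
          exact this
        have : (1:ℝ)/((n1:ℝ)+1) = e2 := rfl
        rw [this] at hgap
        have he : e2 = 2 * eps := by rw [heps]; ring
        rw [he] at hgap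
        linarith [hcon.1, hcon.2]
      rcases hdev with h | h
      · refine ⟨q, hq.1.1, hq.2.1, ?_⟩
        have hlt : F q < F p + eps := hno q hq.1.2 hq.2.2
        rcases abs_cases (F q - F p) with ⟨h1, _⟩ | ⟨h1, _⟩ <;> rw [h1] at h <;> linarith
      · refine ⟨q', hq'.1.1, hq'.2.1, ?_⟩
        have hlt : F q' < F p + eps := hno q' hq'.1.2 hq'.2.2
        rcases abs_cases (F q' - F p) with ⟨h1, _⟩ | ⟨h1, _⟩ <;> rw [h1] at h <;> linarith
  -- classes
  set Knum : ℕ := ⌊(4:ℝ)/w⌋₊ + 1 with hKnum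
  set SU : ℕ → Set (X × Y) :=
    fun k => {p | F p ∈ Icc (-2 + k*w) (-2 + k*w + w)} ∩ UpP with hSU
  set SD : ℕ → Set (X × Y) :=
    fun k => {p | F p ∈ Icc (-2 + k*w) (-2 + k*w + w)} ∩ DnP with hSD
  set L : List (Set (X × Y)) := ((List.range Knum).map SU) ++ ((List.range Knum).map SD)
    with hLdef
  have hcov : ∀ p : X × Y, p.1 ∈ O1 → p.2 ∈ Q1 → ∃ S ∈ L, p ∈ S := by
    intro p hp1 hp2
    have hpC : p ∈ Cset F n1 := hbox ⟨hp1, hp2⟩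
    have h2 : (0:ℝ) ≤ F p + 2 := by
      have := abs_le.mp (hFb p); linarith [this.1]
    set k : ℕ := ⌊(F p + 2)/w⌋₊ with hk
    have hdivnn : (0:ℝ) ≤ (F p + 2)/w := div_nonneg h2 hwpos.le
    have hk1 : (k:ℝ)*w ≤ F p + 2 := by
      have h3 : (k:ℝ) ≤ (F p + 2)/w := Nat.floor_le hdivnn
      calc (k:ℝ)*w ≤ ((F p + 2)/w)*w := by nlinarith
        _ = F p + 2 := by field_simp
    have hk2 : F p + 2 < (k:ℝ)*w + w := by
      have h3 : (F p + 2)/w < (k:ℝ) + 1 := Nat.lt_floor_add_one _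
      have h4 : ((F p + 2)/w)*w < ((k:ℝ) + 1)*w := by nlinarith
      calc F p + 2 = ((F p + 2)/w)*w := by field_simp
        _ < ((k:ℝ)+1)*w := h4
        _ = (k:ℝ)*w + w := by ring
    have hkK : k < Knum := by
      have h4 : F p + 2 ≤ 4 := by linarith [(abs_le.mp (hFb p)).2]
      have h3 : (F p + 2)/w ≤ 4/w := by gcongr
      have h5 : k ≤ ⌊(4:ℝ)/w⌋₊ := Nat.floor_le_floor h3
      omega
    have hmemI : F p ∈ Icc (-2 + (k:ℝ)*w) (-2 + (k:ℝ)*w + w) :=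
      ⟨by linarith, by linarith⟩
    rcases hdich p hpC with hu | hd
    · refine ⟨SU k, List.mem_append_left _ (List.mem_map.mpr ⟨k, List.mem_range.mpr hkK, rfl⟩), ?_⟩
      exact ⟨hmemI, hu⟩
    · refine ⟨SD k, List.mem_append_right _ (List.mem_map.mpr ⟨k, List.mem_range.mpr hkK, rfl⟩), ?_⟩
      exact ⟨hmemI, hd⟩
  obtain ⟨S, hSL, O3, Q3, hO3o, hQ3o, hO3ne, hQ3ne, hO3s, hQ3s, hdense⟩ :=
    listDense L O1 Q1 hO1o hQ1o hO1ne hQ1ne hcov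
  rw [hLdef, List.mem_append] at hSL
  rcases hSL with hSL | hSL
  · obtain ⟨k, hkr, rfl⟩ := List.mem_map.mp hSL
    refine ⟨F, O3, Q3, -2 + k*w, eps, w, Or.inl rfl,
      hO3o, hO3ne, hQ3o, hQ3ne, hwpos, h5w, ?_⟩
    intro Gx Gy hGxo hGyo hGxne hGyne hGxs hGys
    obtain ⟨p, hpS, hp1, hp2⟩ := hdense Gx Gy hGxo hGyo hGxne hGyne hGxs hGys
    obtain ⟨hpIcc, hpUp⟩ := hpS
    constructor
    · exact ⟨p, hp1, hp2, hpIcc.1, hpIcc.2⟩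
    · obtain ⟨q, hq1, hq2, hqv⟩ := hpUp Gx Gy hGxo hGyo hp1 hp2
      exact ⟨q, hq1, hq2, by linarith [hpIcc.1]⟩
  · obtain ⟨k, hkr, rfl⟩ := List.mem_map.mp hSL
    refine ⟨(fun p => -F p), O3, Q3, -(-2 + k*w + w), eps, w, Or.inr rfl,
      hO3o, hO3ne, hQ3o, hQ3ne, hwpos, h5w, ?_⟩
    intro Gx Gy hGxo hGyo hGxne hGyne hGxs hGys
    obtain ⟨p, hpS, hp1, hp2⟩ := hdense Gx Gy hGxo hGyo hGxne hGyne hGxs hGys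
    obtain ⟨hpIcc, hpDn⟩ := hpS
    constructor
    · exact ⟨p, hp1, hp2, by simp only; linarith [hpIcc.2], by simp only; linarith [hpIcc.1]⟩
    · obtain ⟨q, hq1, hq2, hqv⟩ := hpDn Gx Gy hGxo hGyo hp1 hp2
      exact ⟨q, hq1, hq2, by simp only; linarith [hpIcc.2]⟩

end Red2

end Aux

/-- The Stone–Čech compactification of the discrete space `ℕ`, realized as the space of
ultrafilters on `ℕ` with the Stone topology. -/
theorem stmt2 {X Y : Type*} [TopologicalSpace X] [TopologicalSpace Y]
    [Nonempty X] [Nonempty Y] [T3Space Y]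
    (hX : IsAlphaFavorable X)
    (hY : ∀ F : Set Y, IsClosed F → TopologicalSpace.IsSeparable F → IsCompact F)
    (f : X × Y → ℝ)
    (hq : ∀ y : Y, IsQuasicontinuous fun x => f (x, y))
    (hc : ∀ x : X, Continuous fun y => f (x, y))
    (hdisc : ∀ p : X × Y, ¬ ContinuousAt f p) :
    ∃ Y₀ : Set Y, IsCompact Y₀ ∧ Nonempty (Y₀ ≃ₜ Ultrafilter ℕ) := by
  classical
  obtain ⟨σ, hσ1, hσ2⟩ := hX
  set F : X × Y → ℝ := fun p => Real.arctan (f p) with hF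
  have hFb : ∀ p, |F p| ≤ 2 := by
    intro p
    have h1 := Real.arctan_lt_pi_div_two (f p)
    have h2 := Real.neg_pi_div_two_lt_arctan (f p)
    have h3 := Real.pi_le_four
    rw [abs_le]
    exact ⟨by linarith, by linarith⟩
  have hqF : ∀ y : Y, IsQuasicontinuous fun x => F (x, y) := by
    intro y x0 U hU V hV
    have hV' : Real.arctan ⁻¹' V ∈ nhds (f (x0, y)) :=
      Real.continuous_arctan.continuousAt.preimage_mem_nhds hV
    obtain ⟨U1, h1, h2, h3, h4⟩ := hq y x0 U hU _ hV'
    exact ⟨U1, h1, h2, h3, fun x hx => h4 x hx⟩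
  have hcF : ∀ x : X, Continuous fun y => F (x, y) :=
    fun x => Real.continuous_arctan.comp (hc x)
  have hdiscF : ∀ p : X × Y, ¬ ContinuousAt F p := by
    intro p hcont
    apply hdisc p
    have htan : ContinuousAt Real.tan (F p) := by
      rw [Real.continuousAt_tan]
      show Real.cos (Real.arctan (f p)) ≠ 0
      rw [Real.cos_arctan]
      positivity
    have hcomp : ContinuousAt (fun q => Real.tan (F q)) p := htan.comp hcont
    have heq : (fun q => Real.tan (F q)) = f := by
      funext q
      exact Real.tan_arctan (f q)
    rwa [heq] at hcomp
  obtain ⟨n1, O1, Q1, hO1o, hQ1o, hO1ne, hQ1ne, -, -, hbox⟩ :=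
    lemB hY σ hσ1 hσ2 (Cset F) (Cset_closed F) Set.univ Set.univ isOpen_univ isOpen_univ
      Set.univ_nonempty Set.univ_nonempty (fun p _ _ => Cset_cover F hdiscF p)
  obtain ⟨g, Os, Qs, c, eps, w, hg, GS⟩ :=
    exists_goodSetup F hFb n1 O1 Q1 hO1o hQ1o hO1ne hQ1ne hbox listDense
  rcases hg with rfl | rfl
  · exact mainCons hY hσ1 hσ2 hqF hcF GS
  · have hqg : ∀ y : Y, IsQuasicontinuous fun x => -F (x, y) := by
      intro y x0 U hU V hV
      have hV' : (fun r : ℝ => -r) ⁻¹' V ∈ nhds (F (x0, y)) :=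
        (continuous_neg.continuousAt).preimage_mem_nhds hV
      obtain ⟨U1, h1, h2, h3, h4⟩ := hqF y x0 U hU _ hV'
      exact ⟨U1, h1, h2, h3, fun x hx => h4 x hx⟩
    have hcg : ∀ x : X, Continuous fun y => -F (x, y) := fun x => (hcF x).neg
    exact mainCons hY hσ1 hσ2 hqg hcg GS
end

section
/- Every regular topological space in which every separable closed subset is compact is a Baire space. -/
theorem stmt3 {Y : Type*} [TopologicalSpace Y] [RegularSpace Y]
    (hY : ∀ F : Set Y, IsClosed F → TopologicalSpace.IsSeparable F → IsCompact F) :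
    BaireSpace Y := by
  constructor
  intro f hfo hfd
  rw [dense_iff_inter_open]
  intro W hW hWne
  -- step lemma
  have step : ∀ n : ℕ, ∀ V : Set Y, IsOpen V → V.Nonempty →
      ∃ V' : Set Y, IsOpen V' ∧ V'.Nonempty ∧ closure V' ⊆ V ∩ f n := by
    intro n V hVo hVne
    have hne : (V ∩ f n).Nonempty := by
      obtain ⟨x, hx⟩ := hVne
      exact (hfd n).inter_open_nonempty V hVo ⟨x, hx⟩
    obtain ⟨x, hx⟩ := hne
    have hnhds : V ∩ f n ∈ nhds x :=
      (hVo.inter (hfo n)).mem_nhds hx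
    obtain ⟨t, ht, htc, hts⟩ := exists_mem_nhds_isClosed_subset hnhds
    refine ⟨interior t, isOpen_interior, ⟨x, mem_interior_iff_mem_nhds.2 ht⟩, ?_⟩
    calc closure (interior t) ⊆ closure t := closure_mono interior_subset
    _ = t := htc.closure_eq
    _ ⊆ V ∩ f n := hts
  choose g hgo hgne hgsub using step
  -- recursive sequence of open sets
  let V : ℕ → {s : Set Y // IsOpen s ∧ s.Nonempty} := fun n =>
    Nat.rec ⟨W, hW, hWne⟩ (fun n p => ⟨g n p.1 p.2.1 p.2.2, hgo n p.1 p.2.1 p.2.2,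
      hgne n p.1 p.2.1 p.2.2⟩) n
  have hVsub : ∀ n, closure (V (n+1)).1 ⊆ (V n).1 ∩ f n := fun n =>
    hgsub n (V n).1 (V n).2.1 (V n).2.2
  have hVmono : ∀ n, (V (n+1)).1 ⊆ (V n).1 := fun n =>
    subset_closure.trans ((hVsub n).trans Set.inter_subset_left)
  have hVle : ∀ m n, m ≤ n → (V n).1 ⊆ (V m).1 := by
    intro m n hmn
    induction n with
    | zero => simp_all
    | succ k ih =>
      rcases Nat.lt_or_ge m (k+1) with h | h
      · exact (hVmono k).trans (ih (Nat.lt_succ_iff.1 h))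
      · have : m = k + 1 := le_antisymm (by omega) h
        subst this; exact subset_rfl
  -- pick points
  choose x hx using fun n => (V n).2.2
  set K := closure (Set.range x) with hK
  have hKcomp : IsCompact K :=
    hY K isClosed_closure ((Set.countable_range x).isSeparable.closure)
  set t : ℕ → Set Y := fun n => closure (V (n+1)).1 ∩ K with ht
  have htne : ∀ n, (t n).Nonempty := by
    intro n
    refine ⟨x (n+1), subset_closure (hx (n+1)), subset_closure ⟨n+1, rfl⟩⟩
  have htmono : ∀ n, t (n+1) ⊆ t n := by
    intro n
    refine Set.inter_subset_inter_left _ ?_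
    exact closure_mono (hVmono (n+1))
  have htcl : ∀ n, IsClosed (t n) := fun n => isClosed_closure.inter isClosed_closure
  have hcomp0 : IsCompact (t 0) := hKcomp.of_isClosed_subset (htcl 0) Set.inter_subset_right
  obtain ⟨y, hy⟩ := IsCompact.nonempty_iInter_of_sequence_nonempty_isCompact_isClosed
    t htmono htne hcomp0 htcl
  simp only [Set.mem_iInter] at hy
  refine ⟨y, ?_, ?_⟩
  · exact ((hVsub 0).trans Set.inter_subset_left) (hy 0).1
  · rw [Set.mem_iInter]
    intro n
    exact ((hVsub n) (hy n).1).2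
end

section
/- Let Y be a regular space and (yₙ) a sequence in Y whose closure Y₀ = cl{yₙ : n ∈ ℕ} is compact. Suppose that for every subset N ⊆ ℕ there exists a continuous function g : Y → [0,1] with g(yₙ) = 1 for n ∈ N and g(yₙ) = 0 for n ∉ N. Then Y₀ is homeomorphic to βℕ. -/
theorem stmt4 {Y : Type*} [TopologicalSpace Y] [T3Space Y]
    (y : ℕ → Y) (hcomp : IsCompact (closure (Set.range y)))
    (hsep : ∀ N : Set ℕ, ∃ g : Y → ℝ, Continuous g ∧
      (∀ t : Y, g t ∈ Set.Icc (0 : ℝ) 1) ∧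
      (∀ n ∈ N, g (y n) = 1) ∧ (∀ n ∉ N, g (y n) = 0)) :
    Nonempty ((closure (Set.range y) : Set Y) ≃ₜ Ultrafilter ℕ) := by
  haveI : CompactSpace (closure (Set.range y) : Set Y) :=
    isCompact_iff_compactSpace.mp hcomp
  set f : ℕ → (closure (Set.range y) : Set Y) :=
    fun n => ⟨y n, subset_closure (Set.mem_range_self n)⟩ with hf
  set φ : Ultrafilter ℕ → (closure (Set.range y) : Set Y) :=
    Ultrafilter.extend f with hφ
  have hcont : Continuous φ := continuous_ultrafilter_extend f
  have htends : ∀ u : Ultrafilter ℕ, Filter.Tendsto f u (nhds (φ u)) := by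
    intro u
    exact (ultrafilter_extend_eq_iff (f := f) (b := u) (c := φ u)).mp rfl
  have hval : ∀ u : Ultrafilter ℕ, ∀ g : Y → ℝ, Continuous g →
      Filter.Tendsto (fun n => g (y n)) (u : Filter ℕ) (nhds (g (φ u))) := by
    intro u g hg
    exact ((hg.comp continuous_subtype_val).continuousAt.tendsto).comp (htends u)
  have hinj : Function.Injective φ := by
    intro u v huv
    by_contra hne
    obtain ⟨N, hNu, hNv⟩ : ∃ N : Set ℕ, N ∈ u ∧ Nᶜ ∈ v := by
      by_contra hcon
      push_neg at hcon
      have hle : (v : Filter ℕ) ≤ (u : Filter ℕ) := by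
        intro s hs
        have := hcon s hs
        rwa [Ultrafilter.compl_mem_iff_notMem, not_not] at this
      exact hne (Ultrafilter.coe_le_coe.mp hle).symm
    obtain ⟨g, hg, _, h1, h0⟩ := hsep N
    have t1 : Filter.Tendsto (fun n => g (y n)) (u : Filter ℕ) (nhds 1) := by
      refine Filter.Tendsto.congr' ?_ tendsto_const_nhds
      filter_upwards [hNu] with n hn using (h1 n hn).symm
    have t0 : Filter.Tendsto (fun n => g (y n)) (v : Filter ℕ) (nhds 0) := by
      refine Filter.Tendsto.congr' ?_ tendsto_const_nhds
      filter_upwards [hNv] with n hn using (h0 n hn).symm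
    have e1 : g (φ u) = 1 := tendsto_nhds_unique (hval u g hg) t1
    have e0 : g (φ v) = 0 := tendsto_nhds_unique (hval v g hg) t0
    rw [huv, e0] at e1
    norm_num at e1
  have hsurj : Function.Surjective φ := by
    intro x
    have hcl : IsClosed (Set.range φ) := (isCompact_range hcont).isClosed
    have hsub : Set.range f ⊆ Set.range φ := by
      rintro _ ⟨n, rfl⟩
      refine ⟨pure n, ?_⟩
      exact congrFun (ultrafilter_extend_extends f) n
    have hxcl : x ∈ closure (Set.range f) := by
      rw [closure_subtype]
      have : Subtype.val '' Set.range f = Set.range y := by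
        rw [← Set.range_comp]; rfl
      rw [this]
      exact x.2
    exact closure_minimal hsub hcl hxcl
  exact ⟨(Continuous.homeoOfEquivCompactToT2
    (f := Equiv.ofBijective φ ⟨hinj, hsurj⟩) hcont).symm⟩
end

section
/- Let X = βℕ \ ℕ and let (Aₙ) and (Bₙ) be sequences of closed subsets of X. Put A = ⋃ₙ Aₙ and B = ⋃ₙ Bₙ. If cl(A) ∩ B = ∅ and A ∩ cl(B) = ∅, then cl(A) ∩ cl(B) = ∅. -/
/-- The remainder `βℕ \ ℕ` of the Stone–Čech compactification of the discrete space `ℕ`,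
realized as the subspace of free (nonprincipal) ultrafilters in the space `Ultrafilter ℕ`
of all ultrafilters on `ℕ` with the Stone topology. -/
abbrev OmegaStar : Type := {x : Ultrafilter ℕ // x ∉ Set.range (pure : ℕ → Ultrafilter ℕ)}

namespace OmegaStarAux

open Set

/-- Basic clopen subsets of `OmegaStar`. -/
def bstar (s : Set ℕ) : Set OmegaStar := {x | s ∈ x.1}

lemma isOpen_bstar (s : Set ℕ) : IsOpen (bstar s) :=
  (ultrafilter_isOpen_basic s).preimage continuous_subtype_val

lemma isClosed_bstar (s : Set ℕ) : IsClosed (bstar s) :=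
  (ultrafilter_isClosed_basic s).preimage continuous_subtype_val

lemma bstar_mono {s t : Set ℕ} (h : s ⊆ t) : bstar s ⊆ bstar t :=
  fun x hx => Filter.mem_of_superset hx h

lemma isOpen_range_pure : IsOpen (Set.range (pure : ℕ → Ultrafilter ℕ)) := by
  have : Set.range (pure : ℕ → Ultrafilter ℕ) = ⋃ n, {u : Ultrafilter ℕ | ({n} : Set ℕ) ∈ u} := by
    ext u
    simp only [Set.mem_range, Set.mem_iUnion, Set.mem_setOf_eq]
    constructor
    · rintro ⟨n, rfl⟩; exact ⟨n, rfl⟩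
    · rintro ⟨n, hn⟩
      obtain ⟨x, hx, hux⟩ := Ultrafilter.eq_pure_of_finite_mem (Set.finite_singleton n) hn
      exact ⟨x, hux.symm⟩
  rw [this]
  exact isOpen_iUnion fun n => ultrafilter_isOpen_basic _

instance : CompactSpace OmegaStar :=
  isCompact_iff_compactSpace.mp
    ((isOpen_range_pure.isClosed_compl).isCompact :
      IsCompact ((Set.range (pure : ℕ → Ultrafilter ℕ))ᶜ))

/-- Any compact set inside an open set can be enclosed in a basic clopen set inside it. -/
lemma exists_bstar_between {K O : Set OmegaStar} (hK : IsCompact K) (hO : IsOpen O)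
    (hKO : K ⊆ O) : ∃ S : Set ℕ, K ⊆ bstar S ∧ bstar S ⊆ O := by
  obtain ⟨W, hW, rfl⟩ := isOpen_induced_iff.mp hO
  have hbasic : ∀ x : K, ∃ s : Set ℕ, (x : OmegaStar) ∈ bstar s ∧ bstar s ⊆ Subtype.val ⁻¹' W := by
    rintro ⟨x, hx⟩
    obtain ⟨v, ⟨s, rfl⟩, hxv, hvW⟩ :=
      ultrafilterBasis_is_basis.exists_subset_of_mem_open (hKO hx) hW
    exact ⟨s, hxv, fun y hy => hvW hy⟩
  choose s hs hsub using hbasic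
  obtain ⟨t, ht⟩ := hK.elim_finite_subcover (fun x : K => bstar (s x))
    (fun x => isOpen_bstar _) (fun x hx => Set.mem_iUnion.mpr ⟨⟨x, hx⟩, hs _⟩)
  refine ⟨⋃ i ∈ t, s i, ?_, ?_⟩
  · intro x hx
    obtain ⟨i, hit, hxi⟩ := Set.mem_iUnion₂.mp (ht hx)
    exact bstar_mono (Set.subset_biUnion_of_mem hit) hxi
  · intro x hx
    obtain ⟨i, hit, hxi⟩ := (Ultrafilter.finite_biUnion_mem_iff t.finite_toSet).mp hx
    exact hsub i hxi

end OmegaStarAux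

theorem stmt5 (A B : ℕ → Set OmegaStar)
    (hA : ∀ n, IsClosed (A n)) (hB : ∀ n, IsClosed (B n))
    (h1 : closure (⋃ n, A n) ∩ (⋃ n, B n) = ∅)
    (h2 : (⋃ n, A n) ∩ closure (⋃ n, B n) = ∅) :
    closure (⋃ n, A n) ∩ closure (⋃ n, B n) = ∅ := by
  open OmegaStarAux in
  -- enclose each `A n` in a basic clopen set disjoint from `closure (⋃ n, B n)`
  have hAsep : ∀ n, ∃ S : Set ℕ, A n ⊆ bstar S ∧ bstar S ⊆ (closure (⋃ m, B m))ᶜ := by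
    intro n
    refine exists_bstar_between ((hA n).isCompact) isClosed_closure.isOpen_compl ?_
    intro x hx hxB
    exact absurd (Set.mem_inter (Set.mem_iUnion.mpr ⟨n, hx⟩) hxB) (by rw [h2]; exact id)
  have hBsep : ∀ n, ∃ T : Set ℕ, B n ⊆ bstar T ∧ bstar T ⊆ (closure (⋃ m, A m))ᶜ := by
    intro n
    refine exists_bstar_between ((hB n).isCompact) isClosed_closure.isOpen_compl ?_
    intro x hx hxA
    exact absurd (Set.mem_inter hxA (Set.mem_iUnion.mpr ⟨n, hx⟩)) (by rw [h1]; exact id)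
  choose S hSA hSB using hAsep
  choose T hTB hTA using hBsep
  -- refine them to make the two families pairwise disjoint
  set S' : ℕ → Set ℕ := fun n => S n \ ⋃ k ≤ n, T k with hS'def
  set T' : ℕ → Set ℕ := fun m => T m \ ⋃ k ≤ m, S k with hT'def
  have hdisj : ∀ n m, S' n ∩ T' m = ∅ := by
    intro n m
    ext a
    simp only [Set.mem_inter_iff, Set.mem_empty_iff_false, iff_false, not_and]
    intro ha hb
    obtain ⟨haS, haT⟩ := ha
    obtain ⟨hbT, hbS⟩ := hb
    rcases le_total m n with h | h
    · exact haT (Set.mem_biUnion h hbT)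
    · exact hbS (Set.mem_biUnion h haS)
  have hAS' : ∀ n, A n ⊆ bstar (S' n) := by
    intro n x hx
    have hS : S n ∈ x.1 := hSA n hx
    have hT : (⋃ k ≤ n, T k) ∉ x.1 := by
      intro hmem
      obtain ⟨k, _, hk⟩ := (Ultrafilter.finite_biUnion_mem_iff (Set.finite_Iic n)).mp
        (by simpa using hmem)
      exact hTA k hk (subset_closure (Set.mem_iUnion.mpr ⟨n, hx⟩))
    exact Filter.diff_mem hS ((Ultrafilter.compl_mem_iff_notMem).mpr hT)
  have hBT' : ∀ m, B m ⊆ bstar (T' m) := by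
    intro m x hx
    have hT : T m ∈ x.1 := hTB m hx
    have hS : (⋃ k ≤ m, S k) ∉ x.1 := by
      intro hmem
      obtain ⟨k, _, hk⟩ := (Ultrafilter.finite_biUnion_mem_iff (Set.finite_Iic m)).mp
        (by simpa using hmem)
      exact hSB k hk (subset_closure (Set.mem_iUnion.mpr ⟨m, hx⟩))
    exact Filter.diff_mem hT ((Ultrafilter.compl_mem_iff_notMem).mpr hS)
  -- the separating set
  set C : Set ℕ := ⋃ n, S' n with hCdef
  have hclA : closure (⋃ n, A n) ⊆ bstar C := by
    apply closure_minimal _ (isClosed_bstar C)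
    exact Set.iUnion_subset fun n =>
      (hAS' n).trans (bstar_mono (Set.subset_iUnion S' n))
  have hclB : closure (⋃ m, B m) ⊆ bstar Cᶜ := by
    apply closure_minimal _ (isClosed_bstar Cᶜ)
    refine Set.iUnion_subset fun m => (hBT' m).trans (bstar_mono ?_)
    intro a ha hC
    obtain ⟨n, hn⟩ := Set.mem_iUnion.mp hC
    exact absurd (Set.mem_inter hn ha) (by rw [hdisj n m]; exact id)
  ext x
  simp only [Set.mem_inter_iff, Set.mem_empty_iff_false, iff_false, not_and]
  intro hxA hxB
  exact (Ultrafilter.compl_mem_iff_notMem.mp (hclB hxB)) (hclA hxA)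
end

section
/- For every countable subset A of βℕ \ ℕ, the closure of A in βℕ \ ℕ is homeomorphic to the Stone–Čech compactification βA of the subspace A. -/
open Filter Set Topology

lemma isOpen_range_pure : IsOpen (Set.range (pure : ℕ → Ultrafilter ℕ)) := by
  have : Set.range (pure : ℕ → Ultrafilter ℕ) = ⋃ n, {u : Ultrafilter ℕ | ({n} : Set ℕ) ∈ u} := by
    ext u
    constructor
    · rintro ⟨n, rfl⟩
      exact Set.mem_iUnion.mpr ⟨n, singleton_mem_pure⟩
    · intro hu
      obtain ⟨n, hn⟩ := Set.mem_iUnion.mp hu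
      refine ⟨n, ?_⟩
      have : (↑u : Filter ℕ) = pure n := (u.neBot.eq_pure_iff).mpr hn
      exact (Ultrafilter.coe_injective (by simpa using this)).symm
  rw [this]
  exact isOpen_iUnion fun n => ultrafilter_isOpen_basic _
instance : CompactSpace OmegaStar :=
  isCompact_iff_compactSpace.mp (isOpen_range_pure.isClosed_compl.isCompact)

/-- Approximate extension lemma: any continuous `[0,1]`-valued function on a countable subset
of `OmegaStar` can be approximated within `ε` by (the restriction of) a continuous function
on all of `OmegaStar`. -/
lemma approx_extension (A : Set OmegaStar) (hA : A.Countable) (f : A → ℝ)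
    (hf : Continuous f) (hr : ∀ a, f a ∈ Set.Icc (0:ℝ) 1) {ε : ℝ} (hε : 0 < ε) :
    ∃ F : OmegaStar → ℝ, Continuous F ∧ ∀ a : A, |F a - f a| ≤ ε := by
  classical
  rcases A.eq_empty_or_nonempty with h | hne
  · exact ⟨0, continuous_const, fun a => absurd a.2 (by simp [h])⟩
  obtain ⟨p, hp⟩ := hA.exists_eq_range hne
  have hmem : ∀ n, p n ∈ A := fun n => hp ▸ Set.mem_range_self n
  set aelt : ℕ → A := fun n => ⟨p n, hmem n⟩ with haelt
  set fv : ℕ → ℝ := fun n => f (aelt n) with hfv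
  -- extract basic neighborhoods witnessing continuity
  have hcont : ∀ n : ℕ, ∃ C : Set ℕ, C ∈ ((p n).1 : Ultrafilter ℕ) ∧
      ∀ a : A, C ∈ ((a.1.1 : Ultrafilter ℕ)) → |f a - fv n| ≤ ε := by
    intro n
    have h1 : f ⁻¹' (Metric.closedBall (fv n) ε) ∈ 𝓝 (aelt n) :=
      hf.continuousAt (Metric.closedBall_mem_nhds _ hε)
    rw [nhds_subtype_eq_comap, Filter.mem_comap] at h1
    obtain ⟨V, hV, hV2⟩ := h1
    rw [nhds_subtype_eq_comap, Filter.mem_comap] at hV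
    obtain ⟨W, hW, hW2⟩ := hV
    obtain ⟨t, ⟨C, rfl⟩, htx, hts⟩ := ultrafilterBasis_is_basis.mem_nhds_iff.mp hW
    refine ⟨C, htx, ?_⟩
    intro a ha
    have : a ∈ f ⁻¹' (Metric.closedBall (fv n) ε) := hV2 (hW2 (hts ha))
    simpa [Real.dist_eq] using this
  choose C hC1 hC2 using hcont
  -- the function on ℕ
  have h01 : (0:ℝ) ∈ Set.Icc (0:ℝ) 1 := ⟨le_refl _, zero_le_one⟩
  set g : ℕ → Set.Icc (0:ℝ) 1 := fun k =>
    if h : ∃ n, k ∈ C n then ⟨fv (Nat.find h), hr _⟩ else ⟨0, h01⟩ with hg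
  refine ⟨fun x => ((Ultrafilter.extend g x.1 : Set.Icc (0:ℝ) 1) : ℝ),
    continuous_subtype_val.comp ((continuous_ultrafilter_extend g).comp continuous_subtype_val),
    ?_⟩
  have key : ∀ n : ℕ, |((Ultrafilter.extend g ((p n).1) : Set.Icc (0:ℝ) 1) : ℝ) - fv n| ≤ ε := by
    intro n
    set T : Set (Set.Icc (0:ℝ) 1) := {y | |(y : ℝ) - fv n| ≤ ε} with hT
    have hTclosed : IsClosed T := by
      apply isClosed_le _ continuous_const
      exact continuous_abs.comp ((continuous_subtype_val).sub continuous_const)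
    have htend : Filter.Tendsto g ((p n).1 : Filter ℕ)
        (𝓝 (Ultrafilter.extend g ((p n).1))) := by
      have := (ultrafilter_extend_eq_iff (f := g) (b := (p n).1)
        (c := Ultrafilter.extend g ((p n).1))).mp rfl
      rwa [Filter.Tendsto, ← Ultrafilter.coe_map]
    have hev : ∀ᶠ k in ((p n).1 : Filter ℕ), g k ∈ T := by
      set S : Set ℕ := C n ∩ ⋂ m ∈ Finset.range n,
        (if C m ∈ ((p n).1 : Ultrafilter ℕ) then Set.univ else (C m)ᶜ) with hS
      have hSmem : S ∈ ((p n).1 : Ultrafilter ℕ) := by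
        refine Filter.inter_mem (hC1 n) ?_
        refine (Filter.biInter_finset_mem _).mpr ?_
        intro m _
        split_ifs with h
        · exact Filter.univ_mem
        · exact (Ultrafilter.compl_mem_iff_notMem).mpr h
      refine Filter.mem_of_superset hSmem ?_
      intro k hk
      have hex : ∃ m, k ∈ C m := ⟨n, hk.1⟩
      have hm0k : k ∈ C (Nat.find hex) := Nat.find_spec hex
      have hm0n : Nat.find hex ≤ n := Nat.find_min' hex hk.1
      have hCm0 : C (Nat.find hex) ∈ ((p n).1 : Ultrafilter ℕ) := by
        rcases lt_or_eq_of_le hm0n with hlt | heq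
        · by_contra hcon
          have := Set.mem_iInter₂.mp hk.2 (Nat.find hex) (Finset.mem_range.mpr hlt)
          rw [if_neg hcon] at this
          exact this hm0k
        · rw [heq]; exact hC1 n
      have hclose : |fv n - fv (Nat.find hex)| ≤ ε := hC2 (Nat.find hex) (aelt n) hCm0
      show g k ∈ T
      rw [hg]
      simp only [dif_pos hex]
      show |fv (Nat.find hex) - fv n| ≤ ε
      rwa [abs_sub_comm]
    have := hTclosed.mem_of_tendsto htend hev
    exact this
  intro a
  have ha' : a.1 ∈ Set.range p := hp ▸ a.2
  obtain ⟨n, hn⟩ := ha'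
  have ha : a = aelt n := Subtype.ext hn.symm
  rw [ha]
  exact key n

theorem stmt6 (A : Set OmegaStar) (hA : A.Countable) :
    Nonempty ((closure A : Set OmegaStar) ≃ₜ StoneCech A) := by
  haveI : CompactSpace (closure A : Set OmegaStar) :=
    isCompact_iff_compactSpace.mp (isClosed_closure.isCompact)
  -- the dense inclusion of A into its closure
  set e : A → (closure A : Set OmegaStar) := fun a => ⟨a.1, subset_closure a.2⟩ with he
  have hec : Continuous e := Continuous.subtype_mk continuous_subtype_val _
  have hedense : DenseRange e := by
    intro x
    rw [closure_subtype]
    have himg : (Subtype.val '' Set.range e) = A := by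
      ext y
      constructor
      · rintro ⟨x, ⟨a, rfl⟩, rfl⟩; exact a.2
      · intro hy; exact ⟨e ⟨y, hy⟩, ⟨⟨y, hy⟩, rfl⟩, rfl⟩
    rw [himg]
    exact x.2
  set φ := stoneCechExtend hec with hφ
  have hφc : Continuous φ := continuous_stoneCechExtend hec
  have hφe : ∀ a : A, φ (stoneCechUnit a) = e a := fun a =>
    congrFun (stoneCechExtend_extends hec) a
  have hsurj : Function.Surjective φ := by
    have hrange : Set.range φ = Set.univ := by
      have h1 : IsClosed (Set.range φ) := (isCompact_range hφc).isClosed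
      have h2 : Set.range e ⊆ Set.range φ := by
        rintro _ ⟨a, rfl⟩; exact ⟨stoneCechUnit a, hφe a⟩
      have := hedense.mono h2
      rwa [dense_iff_closure_eq, h1.closure_eq] at this
    intro y
    have : y ∈ Set.range φ := hrange ▸ Set.mem_univ y
    exact this
  have hinj : Function.Injective φ := by
    intro x y hxy
    by_contra hne
    obtain ⟨g, hg0, hg1, hg01⟩ := exists_continuous_zero_one_of_isClosed
      (isClosed_singleton (x := x)) (isClosed_singleton (x := y))
      (Set.disjoint_singleton.mpr hne)
    set f : A → ℝ := fun a => g (stoneCechUnit a) with hfdef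
    have hfc : Continuous f := g.continuous.comp continuous_stoneCechUnit
    have hfr : ∀ a, f a ∈ Set.Icc (0:ℝ) 1 := fun a => hg01 _
    obtain ⟨F, hFc, hFa⟩ := approx_extension A hA f hfc hfr (ε := 1/3) (by norm_num)
    set h : StoneCech A → ℝ := fun z => F ((φ z : (closure A : Set OmegaStar)) : OmegaStar)
      with hhdef
    have hhc : Continuous h := hFc.comp (continuous_subtype_val.comp hφc)
    have hclosed : IsClosed {z : StoneCech A | |h z - g z| ≤ 1/3} := by
      apply isClosed_le _ continuous_const
      exact continuous_abs.comp (hhc.sub g.continuous)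
    have hsub : Set.range (stoneCechUnit : A → StoneCech A) ⊆
        {z : StoneCech A | |h z - g z| ≤ 1/3} := by
      rintro _ ⟨a, rfl⟩
      show |h (stoneCechUnit a) - g (stoneCechUnit a)| ≤ 1/3
      have h1 : h (stoneCechUnit a) = F a := by
        rw [hhdef]; simp only; rw [hφe a]
      rw [h1]
      exact hFa a
    have hall : ∀ z : StoneCech A, |h z - g z| ≤ 1/3 := by
      have := closure_mono hsub
      rw [hclosed.closure_eq, denseRange_stoneCechUnit.closure_range] at this
      intro z; exact this (Set.mem_univ z)
    have hx := hall x
    have hy := hall y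
    rw [hg0 rfl] at hx
    rw [hg1 rfl] at hy
    have hxy' : h x = h y := by rw [hhdef]; simp only; rw [hxy]
    simp only [Pi.zero_apply, Pi.one_apply, sub_zero] at hx hy
    rw [hxy'] at hx
    have := abs_sub_abs_le_abs_sub (h y) 1
    cases abs_le.mp hx with
    | intro h1 h2 =>
      cases abs_le.mp hy with
      | intro h3 h4 => linarith
  exact ⟨(Continuous.homeoOfEquivCompactToT2
    (f := Equiv.ofBijective φ ⟨hinj, hsurj⟩) hφc).symm⟩
end

section
/- In the space X = βℕ \ ℕ, every nonempty Gδ-set has nonempty interior. -/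
/-- A free ultrafilter contains all cofinite sets. -/
lemma free_le_cofinite (x : OmegaStar) : (x.1 : Filter ℕ) ≤ Filter.cofinite := by
  rcases x.1.le_cofinite_or_eq_pure with h | ⟨a, ha⟩
  · exact h
  · exact absurd ⟨a, ha.symm⟩ x.2

/-- Every member of a free ultrafilter is infinite. -/
lemma mem_infinite (x : OmegaStar) {A : Set ℕ} (hA : A ∈ x.1) : A.Infinite := by
  by_contra h
  rw [Set.not_infinite] at h
  obtain ⟨a, -, ha⟩ := Ultrafilter.eq_pure_of_finite_mem h hA
  exact x.2 ⟨a, ha.symm⟩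

theorem stmt7 (S : Set OmegaStar) (G : ℕ → Set OmegaStar)
    (hG : ∀ n, IsOpen (G n)) (hS : S = ⋂ n, G n) (hne : S.Nonempty) :
    (interior S).Nonempty := by
  obtain ⟨x, hx⟩ := hne
  have hxG : ∀ n, x ∈ G n := by
    intro n; rw [hS] at hx; exact Set.mem_iInter.mp hx n
  -- For each n, find a basic set B n ∈ x with {z | B n ∈ z.1} ⊆ G n
  have hbasic : ∀ n, ∃ B : Set ℕ, B ∈ x.1 ∧ {z : OmegaStar | B ∈ z.1} ⊆ G n := by
    intro n
    obtain ⟨V, hVopen, hVeq⟩ := isOpen_induced_iff.mp (hG n)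
    have hxV : x.1 ∈ V := by have h := hxG n; rw [← hVeq] at h; exact h
    obtain ⟨v, ⟨B, hB⟩, hxv, hvV⟩ :=
      ultrafilterBasis_is_basis.exists_subset_of_mem_open hxV hVopen
    refine ⟨B, ?_, ?_⟩
    · rw [← hB] at hxv; exact hxv
    · intro z hz
      rw [← hVeq]
      exact hvV (by rw [← hB]; exact hz)
  choose B hBx hBG using hbasic
  -- Decreasing sequence A n ∈ x with {z | A n ∈ z.1} ⊆ G n
  set A : ℕ → Set ℕ := fun n => ⋂ k ∈ Finset.range (n + 1), B k with hAdef
  have hAx : ∀ n, A n ∈ x.1 := fun n =>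
    (Filter.biInter_finset_mem _).mpr fun k _ => hBx k
  have hAsub : ∀ n, A n ⊆ B n := fun n =>
    Set.biInter_subset_of_mem (Finset.self_mem_range_succ n)
  have hAanti : ∀ {m n : ℕ}, n ≤ m → A m ⊆ A n := by
    intro m n hnm
    apply Set.biInter_subset_biInter_left
    intro k hk
    exact Finset.mem_range.mpr (by have := Finset.mem_range.mp hk; omega)
  have hAinf : ∀ n, (A n).Infinite := fun n => mem_infinite x (hAx n)
  -- strictly increasing selection a n ∈ A n
  choose g hg hg' using fun n (m : ℕ) => (hAinf n).exists_gt m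
  set a : ℕ → ℕ := fun n => Nat.rec (g 0 0) (fun n p => g (n + 1) p) n with ha
  have haA : ∀ n, a n ∈ A n := by
    intro n; cases n with
    | zero => exact hg 0 0
    | succ k => exact hg (k + 1) (a k)
  have hamono : StrictMono a := strictMono_nat_of_lt_succ fun n => hg' (n + 1) (a n)
  set C : Set ℕ := Set.range a with hC
  have hCinf : C.Infinite := Set.infinite_range_of_injective hamono.injective
  -- C \ A n is finite
  have hCdiff : ∀ n, (C \ A n).Finite := by
    intro n
    apply Set.Finite.subset ((Set.finite_Iio n).image a)
    intro m ⟨⟨k, hk⟩, hm⟩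
    refine ⟨k, ?_, hk⟩
    by_contra hkn
    simp only [Set.mem_Iio, not_lt] at hkn
    exact hm (hAanti hkn (hk ▸ haA k))
  -- the basic open set {z | C ∈ z.1} is contained in S
  have hKS : {z : OmegaStar | C ∈ z.1} ⊆ S := by
    intro z hz
    rw [hS, Set.mem_iInter]
    intro n
    apply hBG n
    have h1 : (C \ A n)ᶜ ∈ z.1 := free_le_cofinite z (hCdiff n).compl_mem_cofinite
    have h2 : A n ∈ z.1 := by
      have : C ∩ (C \ A n)ᶜ ⊆ A n := by
        intro m ⟨hmC, hm⟩
        by_contra hmA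
        exact hm ⟨hmC, hmA⟩
      exact Filter.mem_of_superset (Filter.inter_mem hz h1) this
    exact Filter.mem_of_superset h2 (hAsub n)
  -- it is open and nonempty
  have hKopen : IsOpen {z : OmegaStar | C ∈ z.1} :=
    (ultrafilter_isOpen_basic C).preimage continuous_subtype_val
  -- find a free ultrafilter containing C
  have := hCinf.cofinite_inf_principal_neBot
  set y : Ultrafilter ℕ := Ultrafilter.of (Filter.cofinite ⊓ Filter.principal C) with hy
  have hyle : (y : Filter ℕ) ≤ Filter.cofinite ⊓ Filter.principal C := Ultrafilter.of_le _
  have hyC : C ∈ y := hyle (Filter.mem_inf_of_right (Filter.mem_principal_self C))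
  have hyfree : y ∉ Set.range (pure : ℕ → Ultrafilter ℕ) := by
    rintro ⟨m, hm⟩
    have h1 : {m}ᶜ ∈ y := hyle (Filter.mem_inf_of_left (Set.finite_singleton m).compl_mem_cofinite)
    have h2 : {m} ∈ y := by rw [← hm]; exact Filter.mem_pure.mpr rfl
    have h3 := Filter.inter_mem h1 h2
    rw [Set.compl_inter_self] at h3
    exact Filter.empty_notMem (y : Filter ℕ) h3
  refine ⟨⟨y, hyfree⟩, ?_⟩
  exact interior_maximal hKS hKopen hyC
end

section
/- Let 𝒫 be the family of all closed nowhere dense p-sets in βℕ \ ℕ, let Y = ⋃𝒫 with the subspace topology, and let X be the set of continuous functions x : βℕ \ ℕ → {0,1} endowed with the topology of uniform convergence on members of 𝒫 (basic neighborhoods U(x,P) = {x' : x'|_P = x|_P}, P ∈ 𝒫). Then the evaluation function f : X × Y → ℝ, f(x,y) = x(y), is separately continuous but discontinuous at every point of X × Y. -/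
/-- `A` is a p-set: for every sequence `(Gₙ)` of open sets each containing `A`,
`A ⊆ int (⋂ₙ Gₙ)`. -/
def IsPSet {X : Type*} [TopologicalSpace X] (A : Set X) : Prop :=
  ∀ G : ℕ → Set X, (∀ n, IsOpen (G n) ∧ A ⊆ G n) → A ⊆ interior (⋂ n, G n)

/-- The family 𝒫 of all closed nowhere dense p-sets in `βℕ \ ℕ`. -/
def PP : Set (Set OmegaStar) := {P | IsClosed P ∧ IsNowhereDense P ∧ IsPSet P}

/-- The set of continuous functions `βℕ \ ℕ → {0,1}` (with `{0,1}` realized as `Bool`). -/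
structure XP where
  toFun : OmegaStar → Bool
  continuous_toFun : Continuous toFun

/-- The topology of uniform convergence on members of 𝒫: basic neighborhoods of `x`
are the sets `U(x,P) = {x' : x'|_P = x|_P}`, `P ∈ 𝒫`. -/
instance : TopologicalSpace XP :=
  TopologicalSpace.generateFrom
    {S | ∃ (x : XP) (P : Set OmegaStar), P ∈ PP ∧
      S = {x' : XP | ∀ t ∈ P, x'.toFun t = x.toFun t}}

/-- `Y = ⋃ 𝒫`, with the subspace topology inherited from `βℕ \ ℕ`. -/
def YP : Set OmegaStar := ⋃₀ PP

open Set Filter Topology TopologicalSpace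

namespace Stmt11Aux

/-- Basic neighborhoods in `XP`. -/
def UU (x : XP) (P : Set OmegaStar) : Set XP :=
  {x' : XP | ∀ t ∈ P, x'.toFun t = x.toFun t}

/-- The generating family of the topology on `XP`. -/
def gens : Set (Set XP) :=
  {S | ∃ (x : XP) (P : Set OmegaStar), P ∈ PP ∧
      S = {x' : XP | ∀ t ∈ P, x'.toFun t = x.toFun t}}

lemma isOpen_XP_iff {s : Set XP} : IsOpen s ↔ TopologicalSpace.GenerateOpen gens s := Iff.rfl

lemma empty_mem_PP : ∅ ∈ PP := by
  refine ⟨isClosed_empty, ?_, fun G h z hz => hz.elim⟩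
  simp [IsNowhereDense]

lemma PP_union {P Q : Set OmegaStar} (hP : P ∈ PP) (hQ : Q ∈ PP) : P ∪ Q ∈ PP := by
  obtain ⟨hPc, hPn, hPp⟩ := hP
  obtain ⟨hQc, hQn, hQp⟩ := hQ
  refine ⟨hPc.union hQc, ?_, ?_⟩
  · -- nowhere dense
    show interior (closure (P ∪ Q)) = ∅
    rw [(hPc.union hQc).closure_eq]
    have h1 : interior (P ∪ Q) ∩ Pᶜ ⊆ interior (closure Q) := by
      apply interior_maximal
      · intro a ⟨haPQ, haP⟩
        exact subset_closure ((interior_subset haPQ).resolve_left haP)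
      · exact isOpen_interior.inter hPc.isOpen_compl
    rw [hQn] at h1
    have h2 : interior (P ∪ Q) ⊆ P := by
      intro a ha
      by_contra haP
      exact h1 ⟨ha, haP⟩
    have h3 : interior (P ∪ Q) ⊆ interior (closure P) :=
      interior_maximal (h2.trans subset_closure) isOpen_interior
    rw [hPn] at h3
    exact subset_empty_iff.mp h3
  · -- p-set
    intro G h
    exact union_subset
      (hPp G fun n => ⟨(h n).1, subset_union_left.trans (h n).2⟩)
      (hQp G fun n => ⟨(h n).1, subset_union_right.trans (h n).2⟩)

lemma UU_open {x : XP} {P : Set OmegaStar} (hP : P ∈ PP) : IsOpen (UU x P) :=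
  isOpen_XP_iff.mpr (.basic _ ⟨x, P, hP, rfl⟩)

lemma exists_basic {x : XP} {s : Set XP} (hs : s ∈ 𝓝 x) : ∃ P ∈ PP, UU x P ⊆ s := by
  obtain ⟨O, hOs, hO, hxO⟩ := mem_nhds_iff.mp hs
  suffices h : ∀ O : Set XP, TopologicalSpace.GenerateOpen gens O → x ∈ O →
      ∃ P ∈ PP, UU x P ⊆ O by
    obtain ⟨P, hP, hsub⟩ := h O (isOpen_XP_iff.mp hO) hxO
    exact ⟨P, hP, hsub.trans hOs⟩
  intro O hO
  induction hO with
  | basic S hS =>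
    intro hxS
    obtain ⟨z, P, hP, rfl⟩ := hS
    exact ⟨P, hP, fun x' hx' t ht => (hx' t ht).trans (hxS t ht)⟩
  | univ => exact fun _ => ⟨∅, empty_mem_PP, fun _ _ => trivial⟩
  | inter s t _ _ ihs iht =>
    intro hx
    obtain ⟨P, hP, hPs⟩ := ihs hx.1
    obtain ⟨Q, hQ, hQt⟩ := iht hx.2
    refine ⟨P ∪ Q, PP_union hP hQ, fun x' hx' => ⟨?_, ?_⟩⟩
    · exact hPs fun t ht => hx' t (Or.inl ht)
    · exact hQt fun t ht => hx' t (Or.inr ht)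
  | sUnion S _ ih =>
    intro hx
    obtain ⟨s, hsS, hxs⟩ := hx
    obtain ⟨P, hP, h⟩ := ih s hsS hxs
    exact ⟨P, hP, h.trans (subset_sUnion_of_mem hsS)⟩

lemma free_infinite {z : Ultrafilter ℕ} (hz : z ∉ Set.range (pure : ℕ → Ultrafilter ℕ))
    {B : Set ℕ} (hB : B ∈ z) : B.Infinite := by
  rcases Ultrafilter.le_cofinite_or_eq_pure z with h | ⟨a, rfl⟩
  · intro hfin
    exact (Ultrafilter.compl_notMem_iff.mpr hB) (h hfin.compl_mem_cofinite)
  · exact absurd ⟨a, rfl⟩ hz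

/-- The basic clopen set in `OmegaStar` determined by `B ⊆ ℕ`. -/
def hatC (B : Set ℕ) : Set OmegaStar := Subtype.val ⁻¹' {u : Ultrafilter ℕ | B ∈ u}

lemma hatC_clopen (B : Set ℕ) : IsClopen (hatC B) :=
  ⟨(ultrafilter_isClosed_basic B).preimage continuous_subtype_val,
   (ultrafilter_isOpen_basic B).preimage continuous_subtype_val⟩

lemma exists_basic_clopen {V : Set OmegaStar} (hV : IsOpen V) {z : OmegaStar} (hz : z ∈ V) :
    ∃ B ∈ z.1, hatC B ⊆ V := by
  obtain ⟨V', hV', rfl⟩ := isOpen_induced_iff.mp hV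
  obtain ⟨t, htb, hzt, htV⟩ :=
    ultrafilterBasis_is_basis.exists_subset_of_mem_open (show z.1 ∈ V' from hz) hV'
  obtain ⟨B, rfl⟩ := htb
  exact ⟨B, hzt, fun w hw => htV hw⟩

lemma eq_pure_of_singleton_mem {u : Ultrafilter ℕ} {n : ℕ} (h : ({n} : Set ℕ) ∈ u) :
    u = pure n := by
  obtain ⟨a, ha, rfl⟩ := Ultrafilter.eq_pure_of_finite_mem (Set.finite_singleton n) h
  rw [Set.mem_singleton_iff] at ha
  rw [ha]

lemma isOpen_range_pure : IsOpen (Set.range (pure : ℕ → Ultrafilter ℕ)) := by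
  have h : Set.range (pure : ℕ → Ultrafilter ℕ) = ⋃ n : ℕ, {u : Ultrafilter ℕ | {n} ∈ u} := by
    ext u
    simp only [mem_range, mem_iUnion, mem_setOf_eq]
    constructor
    · rintro ⟨n, rfl⟩
      exact ⟨n, rfl⟩
    · rintro ⟨n, hn⟩
      exact ⟨n, (eq_pure_of_singleton_mem hn).symm⟩
  rw [h]
  exact isOpen_iUnion fun n => ultrafilter_isOpen_basic _

instance : CompactSpace OmegaStar :=
  isCompact_iff_compactSpace.mp isOpen_range_pure.isClosed_compl.isCompact

lemma transplant {B : Set ℕ} (hB : B.Infinite) {P : Set OmegaStar} (hP : P ∈ PP) :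
    ∃ Q ∈ PP, Q ⊆ hatC B ∧ (P.Nonempty → Q.Nonempty) := by
  obtain ⟨hPc, hPn, hPp⟩ := hP
  haveI : Infinite ↥B := hB.to_subtype
  obtain ⟨d⟩ := nonempty_denumerable ↥B
  let e : ℕ ≃ ↥B := (Denumerable.eqv ↥B).symm
  let m : ℕ → ℕ := fun n => (e n : ℕ)
  have hminj : Function.Injective m := fun a b h => e.injective (Subtype.ext h)
  have hrange : Set.range m = B := by
    have : m = Subtype.val ∘ e := rfl
    rw [this, Set.range_comp, Equiv.range_eq_univ, Set.image_univ, Subtype.range_val]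
  have hBmem : ∀ u : Ultrafilter ℕ, B ∈ Ultrafilter.map m u := by
    intro u
    rw [Ultrafilter.mem_map]
    have : m ⁻¹' B = Set.univ := eq_univ_of_forall fun n => (e n).2
    rw [this]
    exact univ_mem
  have hfree : ∀ u : Ultrafilter ℕ, u ∉ Set.range (pure : ℕ → Ultrafilter ℕ) →
      Ultrafilter.map m u ∉ Set.range (pure : ℕ → Ultrafilter ℕ) := by
    rintro u hu ⟨n, hn⟩
    have h1 : ({n} : Set ℕ) ∈ Ultrafilter.map m u := by rw [← hn]; exact rfl
    rw [Ultrafilter.mem_map] at h1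
    have h2 : (m ⁻¹' {n}).Finite :=
      Set.Finite.preimage (hminj.injOn) (finite_singleton n)
    exact free_infinite hu h1 h2
  have hφc : Continuous (Ultrafilter.map m) := by
    rw [ultrafilterBasis_is_basis.continuous_iff]
    rintro s ⟨A, rfl⟩
    have : (Ultrafilter.map m) ⁻¹' {u : Ultrafilter ℕ | A ∈ u}
        = {u : Ultrafilter ℕ | m ⁻¹' A ∈ u} := by
      ext u; exact Ultrafilter.mem_map
    rw [this]
    exact ultrafilter_isOpen_basic _
  let Φ : OmegaStar → OmegaStar := fun z => ⟨Ultrafilter.map m z.1, hfree z.1 z.2⟩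
  have hΦc : Continuous Φ := (hφc.comp continuous_subtype_val).subtype_mk _
  have hΦinj : Function.Injective Φ := by
    intro z₁ z₂ h
    have h1 : Ultrafilter.map m z₁.1 = Ultrafilter.map m z₂.1 := congrArg Subtype.val h
    have h2 : Filter.map m (z₁.1 : Filter ℕ) = Filter.map m (z₂.1 : Filter ℕ) := by
      rw [← Ultrafilter.coe_map, ← Ultrafilter.coe_map, h1]
    exact Subtype.ext (Ultrafilter.coe_injective (Filter.map_injective hminj h2))
  have hrangeΦ : Set.range Φ = hatC B := by
    apply Set.Subset.antisymm
    · rintro _ ⟨z, rfl⟩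
      exact hBmem z.1
    · intro w hw
      have large : Set.range m ∈ w.1 := by rw [hrange]; exact hw
      set u := w.1.comap hminj large with hu
      have hmap : Ultrafilter.map m u = w.1 := by
        refine Ultrafilter.coe_injective ?_
        rw [Ultrafilter.coe_map, Ultrafilter.coe_comap]
        exact Filter.map_comap_of_mem large
      have hufree : u ∉ Set.range (pure : ℕ → Ultrafilter ℕ) := by
        rintro ⟨k, hk⟩
        apply w.2
        refine ⟨m k, ?_⟩
        rw [← hmap, ← hk, Ultrafilter.map_pure]
      exact ⟨⟨u, hufree⟩, Subtype.ext hmap⟩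
  have hemb : Topology.IsClosedEmbedding Φ := hΦc.isClosedEmbedding hΦinj
  have hopenrange : IsOpen (Set.range Φ) := by rw [hrangeΦ]; exact (hatC_clopen B).2
  have hΦopen : IsOpenMap Φ := Topology.IsOpenEmbedding.isOpenMap ⟨hemb.toIsEmbedding, hopenrange⟩
  refine ⟨Φ '' P, ⟨hemb.isClosedMap P hPc, ?_, ?_⟩, ?_, ?_⟩
  · -- nowhere dense
    show interior (closure (Φ '' P)) = ∅
    rw [(hemb.isClosedMap P hPc).closure_eq]
    rw [eq_empty_iff_forall_notMem]
    intro w hw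
    obtain ⟨p, hpP, hpw⟩ := interior_subset hw
    have hop : IsOpen (Φ ⁻¹' interior (Φ '' P)) := isOpen_interior.preimage hΦc
    have hsub : Φ ⁻¹' interior (Φ '' P) ⊆ P := by
      intro a ha
      obtain ⟨p', hp', hpe⟩ := interior_subset ha
      rwa [← hΦinj hpe]
    have h3 : Φ ⁻¹' interior (Φ '' P) ⊆ interior (closure P) :=
      interior_maximal (hsub.trans subset_closure) hop
    rw [hPn] at h3
    exact h3 (show p ∈ _ from by rw [mem_preimage, hpw]; exact hw)
  · -- p-set
    intro G hG
    have h1 : P ⊆ interior (⋂ n, Φ ⁻¹' G n) :=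
      hPp _ fun n => ⟨(hG n).1.preimage hΦc, fun p hp => (hG n).2 ⟨p, hp, rfl⟩⟩
    rintro _ ⟨p, hpP, rfl⟩
    have h2 : Φ '' interior (⋂ n, Φ ⁻¹' G n) ⊆ interior (⋂ n, G n) := by
      apply interior_maximal
      · rintro _ ⟨a, ha, rfl⟩
        rw [mem_iInter]
        intro n
        exact mem_iInter.mp (interior_subset ha) n
      · exact hΦopen _ isOpen_interior
    exact h2 ⟨p, h1 hpP, rfl⟩
  · rintro _ ⟨p, _, rfl⟩
    exact hBmem p.1
  · rintro ⟨p, hp⟩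
    exact ⟨Φ p, p, hp, rfl⟩

end Stmt11Aux

open Stmt11Aux

theorem stmt11 (f : XP × YP → ℝ)
    (hf : ∀ (x : XP) (y : YP), f (x, y) = if x.toFun y.1 = true then 1 else 0) :
    (∀ x : XP, Continuous fun y : YP => f (x, y)) ∧
    (∀ y : YP, Continuous fun x : XP => f (x, y)) ∧
    (∀ p : XP × YP, ¬ ContinuousAt f p) := by
  classical
  refine ⟨?_, ?_, ?_⟩
  · -- separately continuous in y
    intro x
    have h : (fun y : YP => f (x, y))
        = (fun b : Bool => if b = true then (1 : ℝ) else 0) ∘ x.toFun ∘ Subtype.val :=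
      funext fun y => hf x y
    rw [h]
    exact continuous_of_discreteTopology.comp (x.continuous_toFun.comp continuous_subtype_val)
  · -- separately continuous in x
    intro y
    obtain ⟨P₀, hP₀, hyP₀⟩ := y.2
    have hloc : IsLocallyConstant fun x : XP => x.toFun y.1 := by
      intro s
      rw [isOpen_iff_forall_mem_open]
      intro x hx
      refine ⟨UU x P₀, fun x' hx' => ?_, UU_open hP₀, fun t _ => rfl⟩
      show x'.toFun y.1 ∈ s
      rw [hx' y.1 hyP₀]
      exact hx
    have h : (fun x : XP => f (x, y))
        = (fun b : Bool => if b = true then (1 : ℝ) else 0) ∘ fun x : XP => x.toFun y.1 :=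
      funext fun x => hf x y
    rw [h]
    exact continuous_of_discreteTopology.comp hloc.continuous
  · -- discontinuous everywhere
    rintro ⟨x, y⟩ hp
    have hball : Metric.ball (f (x, y)) 1 ∈ 𝓝 (f (x, y)) := Metric.ball_mem_nhds _ one_pos
    have h2 := hp hball
    rw [nhds_prod_eq] at h2
    obtain ⟨U, hU, W, hW, hUW⟩ := Filter.mem_prod_iff.mp h2
    obtain ⟨P, hPmem, hPU⟩ := exists_basic hU
    obtain ⟨t, ht, htW⟩ := (mem_nhds_subtype YP y W).mp hW
    obtain ⟨V, hVt, hVo, hyV⟩ := mem_nhds_iff.mp ht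
    have hVP : ¬ V ⊆ P := by
      intro hsub
      have h3 : V ⊆ interior (closure P) := interior_maximal (hsub.trans subset_closure) hVo
      rw [hPmem.2.1] at h3
      exact h3 hyV
    obtain ⟨z, hzV, hzP⟩ := not_subset.mp hVP
    have hVPo : IsOpen (V \ P) := hVo.sdiff hPmem.1
    obtain ⟨B, hBz, hBsub⟩ := exists_basic_clopen hVPo ⟨hzV, hzP⟩
    have hBinf : B.Infinite := free_infinite z.2 hBz
    obtain ⟨P₀, hP₀, hyP₀⟩ := y.2
    obtain ⟨Q, hQ, hQsub, hQne⟩ := transplant hBinf hP₀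
    obtain ⟨y', hy'Q⟩ := hQne ⟨y.1, hyP₀⟩
    have hy'C : y' ∈ hatC B := hQsub hy'Q
    have hy'VP : y' ∈ V \ P := hBsub hy'C
    have hy'Y : y' ∈ YP := ⟨Q, hQ, hy'Q⟩
    set b : Bool := !(x.toFun y.1) with hb
    have hx'c : Continuous fun s : OmegaStar => if s ∈ hatC B then b else x.toFun s := by
      refine Continuous.if ?_ continuous_const x.continuous_toFun
      intro a ha
      rw [show {a : OmegaStar | a ∈ hatC B} = hatC B from rfl,
        (hatC_clopen B).frontier_eq] at ha
      exact ha.elim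
    set x' : XP := ⟨fun s => if s ∈ hatC B then b else x.toFun s, hx'c⟩ with hx'
    have hx'U : x' ∈ U := by
      apply hPU
      intro s hsP
      have hsC : s ∉ hatC B := fun hC => (hBsub hC).2 hsP
      show (if s ∈ hatC B then b else x.toFun s) = x.toFun s
      rw [if_neg hsC]
    have hkey : ((x', ⟨y', hy'Y⟩) : XP × YP) ∈ U ×ˢ W :=
      ⟨hx'U, htW (show y' ∈ t from hVt hy'VP.1)⟩
    have hdist := hUW hkey
    rw [Set.mem_preimage, Metric.mem_ball, hf x' ⟨y', hy'Y⟩, hf x y] at hdist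
    have hval : x'.toFun y' = !(x.toFun y.1) := by
      show (if y' ∈ hatC B then b else x.toFun y') = _
      rw [if_pos hy'C]
    rw [hval] at hdist
    cases hxy : x.toFun y.1 <;> rw [hxy] at hdist <;>
      simp only [Bool.not_false, Bool.not_true, if_pos, if_neg, Bool.false_eq_true,
        if_true, if_false, reduceIte] at hdist <;>
      rw [Real.dist_eq] at hdist <;> norm_num at hdist
end

section
/- Let 𝒫 be the family of all closed nowhere dense p-sets in βℕ \ ℕ and let X be the set of continuous functions x : βℕ \ ℕ → {0,1} with the topology of uniform convergence on members of 𝒫. Then X is α-favorable: in fact every decreasing sequence of nonempty basic open sets in X has nonempty intersection. -/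
/-- Basic open sets `U(A,B) = {x : x = 0 on A, x = 1 on B}` for disjoint `A, B ∈ 𝒫`. -/
def UAB (A B : Set OmegaStar) : Set XP :=
  {x : XP | (∀ t ∈ A, x.toFun t = false) ∧ ∀ t ∈ B, x.toFun t = true}

namespace Stmt12Aux

open Set TopologicalSpace Filter

/-! ### Basic clopen sets of `βℕ \ ℕ` -/

/-- The basic clopen set of `OmegaStar` determined by `s ⊆ ℕ`. -/
def K (s : Set ℕ) : Set OmegaStar := {u | s ∈ u.val}

lemma free_le_cofinite (u : OmegaStar) : (u.val : Filter ℕ) ≤ Filter.cofinite := by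
  rcases u.val.le_cofinite_or_eq_pure with h | ⟨a, ha⟩
  · exact h
  · exact absurd ⟨a, ha.symm⟩ u.prop

lemma compl_mem_free {s : Set ℕ} (hs : s.Finite) (u : OmegaStar) : sᶜ ∈ u.val :=
  free_le_cofinite u hs.compl_mem_cofinite

lemma K_compl (s : Set ℕ) : K sᶜ = (K s)ᶜ := by
  ext u; exact Ultrafilter.compl_mem_iff_notMem

lemma isClopen_K (s : Set ℕ) : IsClopen (K s) := by
  constructor
  · exact (ultrafilter_isClosed_basic s).preimage continuous_subtype_val
  · exact (ultrafilter_isOpen_basic s).preimage continuous_subtype_val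

lemma K_empty_of_finite {s : Set ℕ} (hs : s.Finite) : K s = ∅ := by
  ext u
  simp only [K, mem_setOf_eq, mem_empty_iff_false, iff_false]
  intro h
  exact Ultrafilter.compl_mem_iff_notMem.mp (compl_mem_free hs u) h

lemma K_nonempty {s : Set ℕ} (hs : s.Infinite) : (K s).Nonempty := by
  have : (Filter.cofinite ⊓ Filter.principal s).NeBot := hs.cofinite_inf_principal_neBot
  obtain ⟨u, hu⟩ := Ultrafilter.exists_le (Filter.cofinite ⊓ Filter.principal s)
  have hfree : u ∉ Set.range (pure : ℕ → Ultrafilter ℕ) := by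
    rintro ⟨n, rfl⟩
    have h1 : ({n}ᶜ : Set ℕ) ∈ (pure n : Ultrafilter ℕ) :=
      hu (Filter.mem_inf_of_left (Set.finite_singleton n).compl_mem_cofinite)
    exact h1 rfl
  refine ⟨⟨u, hfree⟩, ?_⟩
  exact hu (Filter.mem_inf_of_right (Filter.mem_principal_self s))

lemma K_mono {s t : Set ℕ} (h : (s \ t).Finite) : K s ⊆ K t := by
  intro u hu
  have h1 : (s \ t)ᶜ ∈ u.val := compl_mem_free h u
  have h2 : s ∩ (s \ t)ᶜ ∈ u.val := Filter.inter_mem hu h1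
  refine Filter.mem_of_superset h2 ?_
  rintro x ⟨hxs, hxd⟩
  by_contra hxt
  exact hxd ⟨hxs, hxt⟩

lemma isOpen_range_pure : IsOpen (Set.range (pure : ℕ → Ultrafilter ℕ)) := by
  have : Set.range (pure : ℕ → Ultrafilter ℕ) = ⋃ n : ℕ, {u : Ultrafilter ℕ | {n} ∈ u} := by
    ext u
    simp only [Set.mem_range, Set.mem_iUnion, Set.mem_setOf_eq]
    constructor
    · rintro ⟨n, rfl⟩; exact ⟨n, rfl⟩
    · rintro ⟨n, hn⟩
      obtain ⟨x, hx, rfl⟩ := Ultrafilter.eq_pure_of_finite_mem (Set.finite_singleton n) hn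
      exact ⟨x, rfl⟩
  rw [this]
  exact isOpen_iUnion fun n => ultrafilter_isOpen_basic {n}

instance : CompactSpace OmegaStar := by
  have hcl : IsClosed {x : Ultrafilter ℕ | x ∉ Set.range (pure : ℕ → Ultrafilter ℕ)} := by
    rw [show {x : Ultrafilter ℕ | x ∉ Set.range (pure : ℕ → Ultrafilter ℕ)} =
        (Set.range (pure : ℕ → Ultrafilter ℕ))ᶜ from rfl]
    exact isOpen_range_pure.isClosed_compl
  exact isCompact_iff_compactSpace.mp hcl.isCompact

lemma OS_basis : IsTopologicalBasis (Set.range (K : Set ℕ → Set OmegaStar)) := by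
  have h := (ultrafilterBasis_is_basis (α := ℕ)).isInducing
    (Topology.IsInducing.subtypeVal (t := {x : Ultrafilter ℕ | x ∉ Set.range pure}))
  convert h using 1
  · rfl
  rw [ultrafilterBasis, ← Set.range_comp]
  rfl

/-- Between a compact set and an open superset there is a basic clopen set. -/
lemma exists_K_between {A W : Set OmegaStar} (hA : IsCompact A) (hW : IsOpen W)
    (hAW : A ⊆ W) : ∃ s : Set ℕ, A ⊆ K s ∧ K s ⊆ W := by
  have hcov : ∀ u : OmegaStar, u ∈ A → ∃ s : Set ℕ, u ∈ K s ∧ K s ⊆ W := by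
    intro u hu
    obtain ⟨b, ⟨s, rfl⟩, hub, hbW⟩ := OS_basis.exists_subset_of_mem_open (hAW hu) hW
    exact ⟨s, hub, hbW⟩
  choose! s hs1 hs2 using hcov
  obtain ⟨t, ht⟩ := hA.elim_finite_subcover (fun u : A => K (s u))
    (fun u => (isClopen_K _).isOpen) (fun u hu => Set.mem_iUnion.mpr ⟨⟨u, hu⟩, hs1 u hu⟩)
  refine ⟨⋃ u ∈ (t : Set A), s ↑u, ?_, ?_⟩
  · intro v hv
    obtain ⟨u, hut, hvu⟩ := Set.mem_iUnion₂.mp (ht hv)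
    show (⋃ u ∈ (t : Set A), s ↑u) ∈ v.val
    exact Filter.mem_of_superset hvu (Set.subset_biUnion_of_mem (u := fun u : A => s ↑u) hut)
  · intro v hv
    have : ∃ u ∈ (t : Set A), s ↑u ∈ v.val :=
      (Ultrafilter.finite_biUnion_mem_iff t.finite_toSet).mp hv
    obtain ⟨u, _, hu⟩ := this
    exact hs2 ↑u u.2 hu

/-- Separation of disjoint closed sets by a basic clopen set. -/
lemma sep {A B : Set OmegaStar} (hA : IsClosed A) (hB : IsClosed B) (h : Disjoint A B) :
    ∃ s : Set ℕ, A ⊆ K s ∧ B ⊆ K sᶜ := by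
  obtain ⟨s, h1, h2⟩ := exists_K_between hA.isCompact hB.isOpen_compl
    (fun x hx => h.subset_compl_right hx)
  refine ⟨s, h1, ?_⟩
  rw [K_compl]
  exact fun x hx hxs => h2 hxs hx

/-- The p-set property in terms of basic clopen sets. -/
lemma pset_K {A : Set OmegaStar} (hA : A ∈ PP) (a : ℕ → Set ℕ) (h : ∀ n, A ⊆ K (a n)) :
    ∃ c : Set ℕ, A ⊆ K c ∧ ∀ n, (c \ a n).Finite := by
  have hsub : A ⊆ interior (⋂ n, K (a n)) :=
    hA.2.2 _ (fun n => ⟨(isClopen_K _).isOpen, h n⟩)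
  obtain ⟨c, hc1, hc2⟩ := exists_K_between hA.1.isCompact isOpen_interior hsub
  refine ⟨c, hc1, fun n => ?_⟩
  rw [← Set.not_infinite]
  intro hinf
  obtain ⟨u, hu⟩ := K_nonempty hinf
  have h1 : c ∈ u.val ∧ a n ∉ u.val := (u.val.diff_mem_iff).mp hu
  have h2 : u ∈ K (a n) :=
    Set.mem_iInter.mp (interior_subset (hc2 h1.1)) n
  exact h1.2 h2

/-- Interpolation for countable pregaps in `𝒫(ℕ)/fin`. -/
lemma interpolate (c d : ℕ → Set ℕ) (h : ∀ k m, (c k ∩ d m).Finite) :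
    ∃ e : Set ℕ, (∀ k, (c k \ e).Finite) ∧ ∀ m, (e ∩ d m).Finite := by
  set C := Set.accumulate c with hC
  set D := Set.accumulate d with hD
  have hCd : ∀ n m, (C n ∩ d m).Finite := by
    intro n m
    have hsub : C n ∩ d m ⊆ ⋃ i ∈ {i : ℕ | i ≤ n}, (c i ∩ d m) := by
      rintro x ⟨hx1, hx2⟩
      rcases Set.mem_accumulate.mp hx1 with ⟨i, hi, hxi⟩
      exact Set.mem_biUnion hi ⟨hxi, hx2⟩
    exact ((Set.finite_le_nat n).biUnion fun i _ => h i m).subset hsub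
  refine ⟨⋃ n, (C n \ D n), fun k => ?_, fun m => ?_⟩
  · have hsub : c k \ (⋃ n, (C n \ D n)) ⊆ C k ∩ D k := by
      rintro x ⟨hx1, hx2⟩
      refine ⟨Set.subset_accumulate hx1, ?_⟩
      by_contra hxD
      exact hx2 (Set.mem_iUnion.mpr ⟨k, Set.subset_accumulate hx1, hxD⟩)
    have hsub2 : C k ∩ D k ⊆ ⋃ j ∈ {j : ℕ | j ≤ k}, (C k ∩ d j) := by
      rintro x ⟨hx1, hx2⟩
      rcases Set.mem_accumulate.mp hx2 with ⟨j, hj, hxj⟩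
      exact Set.mem_biUnion hj ⟨hx1, hxj⟩
    exact ((((Set.finite_le_nat k).biUnion fun j _ => hCd k j).subset hsub2).subset hsub)
  · have hsub : (⋃ n, (C n \ D n)) ∩ d m ⊆ ⋃ n ∈ {n : ℕ | n < m}, (C n ∩ d m) := by
      rintro x ⟨hx1, hx2⟩
      rcases Set.mem_iUnion.mp hx1 with ⟨n, hxn, hxD⟩
      rcases lt_or_ge n m with h' | h'
      · exact Set.mem_biUnion h' ⟨hxn, hx2⟩
      · exact absurd (Set.monotone_accumulate h' (Set.subset_accumulate hx2)) hxD
    exact ((Set.finite_lt_nat m).biUnion fun n _ => hCd n m).subset hsub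

/-! ### The family 𝒫 -/

lemma PP_empty : (∅ : Set OmegaStar) ∈ PP :=
  ⟨isClosed_empty, isNowhereDense_empty, fun G _ => (Set.empty_subset _)⟩

lemma nwd_union {s t : Set OmegaStar} (hs : IsNowhereDense s) (ht : IsNowhereDense t) :
    IsNowhereDense (s ∪ t) := by
  rw [IsNowhereDense, closure_union]
  rw [IsNowhereDense] at hs ht
  apply Set.eq_empty_of_subset_empty
  intro x hx
  by_cases hxs : x ∈ closure s
  · have h1 : interior (closure s ∪ closure t) \ closure s ⊆ interior (closure t) := by
      apply interior_maximal
      · rintro y ⟨hy1, hy2⟩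
        rcases interior_subset hy1 with h | h
        · exact absurd h hy2
        · exact h
      · exact isOpen_interior.sdiff isClosed_closure
    -- x ∈ closure s; show x ∈ interior (closure s) = ∅
    have h2 : interior (closure s ∪ closure t) ⊆ closure s := by
      intro y hy
      by_contra hys
      have := h1 ⟨hy, hys⟩
      rw [ht] at this
      exact this
    have h3 : interior (closure s ∪ closure t) ⊆ interior (closure s) :=
      interior_maximal h2 isOpen_interior
    have := h3 hx
    rw [hs] at this
    exact this
  · have h1 : interior (closure s ∪ closure t) \ closure s ⊆ interior (closure t) := by
      apply interior_maximal
      · rintro y ⟨hy1, hy2⟩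
        rcases interior_subset hy1 with h | h
        · exact absurd h hy2
        · exact h
      · exact isOpen_interior.sdiff isClosed_closure
    have := h1 ⟨hx, hxs⟩
    rw [ht] at this
    exact this

lemma PP_union {P Q : Set OmegaStar} (hP : P ∈ PP) (hQ : Q ∈ PP) : P ∪ Q ∈ PP := by
  refine ⟨hP.1.union hQ.1, nwd_union hP.2.1 hQ.2.1, ?_⟩
  intro G hG
  exact Set.union_subset
    (hP.2.2 G fun n => ⟨(hG n).1, Set.subset_union_left.trans (hG n).2⟩)
    (hQ.2.2 G fun n => ⟨(hG n).1, Set.subset_union_right.trans (hG n).2⟩)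

lemma nwd_mono {s t : Set OmegaStar} (hst : s ⊆ t) (ht : IsNowhereDense t) :
    IsNowhereDense s := by
  rw [IsNowhereDense] at ht ⊢
  apply Set.eq_empty_of_subset_empty
  rw [← ht]
  exact interior_mono (closure_mono hst)

lemma PP_inter_clopen {P C : Set OmegaStar} (hP : P ∈ PP) (hC : IsClopen C) :
    P ∩ C ∈ PP := by
  refine ⟨hP.1.inter hC.isClosed, nwd_mono Set.inter_subset_left hP.2.1, ?_⟩
  intro G hG
  have key : P ⊆ interior (⋂ n, (G n ∪ Cᶜ)) := by
    apply hP.2.2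
    intro n
    refine ⟨(hG n).1.union hC.isClosed.isOpen_compl, ?_⟩
    intro x hx
    by_cases hxC : x ∈ C
    · exact Or.inl ((hG n).2 ⟨hx, hxC⟩)
    · exact Or.inr hxC
  have hopen : IsOpen (interior (⋂ n, (G n ∪ Cᶜ)) ∩ C) := isOpen_interior.inter hC.isOpen
  have hsub : interior (⋂ n, (G n ∪ Cᶜ)) ∩ C ⊆ ⋂ n, G n := by
    rintro x ⟨hx1, hx2⟩
    rw [Set.mem_iInter]
    intro n
    rcases Set.mem_iInter.mp (interior_subset hx1) n with h | h
    · exact h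
    · exact absurd hx2 h
  intro x hx
  exact interior_maximal hsub hopen ⟨key hx.1, hx.2⟩

lemma PP_biUnion {ι : Type*} {f : Set ι} (hf : f.Finite) {Q : ι → Set OmegaStar}
    (hQ : ∀ s ∈ f, Q s ∈ PP) : (⋃ s ∈ f, Q s) ∈ PP := by
  revert hQ
  refine Set.Finite.induction_on (motive := fun f _ => (∀ s ∈ f, Q s ∈ PP) → (⋃ s ∈ f, Q s) ∈ PP) f hf (fun _ => by simpa using PP_empty) ?_
  intro a f' _ _ ih hQ
  rw [Set.biUnion_insert]
  exact PP_union (hQ a (Set.mem_insert a f'))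
    (ih fun s hs => hQ s (Set.mem_insert_of_mem a hs))

/-! ### Part 2: decreasing sequences of basic sets -/

lemma main2 (A B : ℕ → Set OmegaStar) (hA : ∀ n, A n ∈ PP) (hB : ∀ n, B n ∈ PP)
    (_hdis : ∀ n, Disjoint (A n) (B n))
    (hne : ∀ n, (UAB (A n) (B n)).Nonempty)
    (hsub : ∀ n, UAB (A (n + 1)) (B (n + 1)) ⊆ UAB (A n) (B n)) :
    (⋂ n, UAB (A n) (B n)).Nonempty := by
  have chain : ∀ n m, n ≤ m → UAB (A m) (B m) ⊆ UAB (A n) (B n) := by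
    intro n m hnm
    induction m, hnm using Nat.le_induction with
    | base => exact subset_rfl
    | succ m _ ih => exact (hsub m).trans ih
  have cross : ∀ n m, Disjoint (A n) (B m) := by
    intro n m
    rw [Set.disjoint_left]
    intro t htA htB
    obtain ⟨x, hx⟩ := hne (max n m)
    have h1 := (chain n _ (le_max_left n m) hx).1 t htA
    have h2 := (chain m _ (le_max_right n m) hx).2 t htB
    rw [h1] at h2
    exact Bool.false_ne_true h2
  set S := Set.accumulate A with hSdef
  set T := Set.accumulate B with hTdef
  have hS : ∀ n, S n ∈ PP := fun n => PP_biUnion (Set.finite_le_nat n) fun i _ => hA i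
  have hT : ∀ n, T n ∈ PP := fun n => PP_biUnion (Set.finite_le_nat n) fun i _ => hB i
  have hST : ∀ n, Disjoint (S n) (T n) := by
    intro n
    rw [Set.disjoint_left]
    intro t ht1 ht2
    rcases Set.mem_accumulate.mp ht1 with ⟨i, _, hi⟩
    rcases Set.mem_accumulate.mp ht2 with ⟨j, _, hj⟩
    exact Set.disjoint_left.mp (cross i j) hi hj
  have hsep : ∀ n, ∃ a : Set ℕ, S n ⊆ K a ∧ T n ⊆ K aᶜ :=
    fun n => sep (hS n).1 (hT n).1 (hST n)
  choose a ha1 ha2 using hsep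
  have hAS : ∀ k n, A k ⊆ S (k + n) :=
    fun k n x hx => Set.mem_accumulate.mpr ⟨k, Nat.le_add_right k n, hx⟩
  have hBT : ∀ k n, B k ⊆ T (k + n) :=
    fun k n x hx => Set.mem_accumulate.mpr ⟨k, Nat.le_add_right k n, hx⟩
  have hc : ∀ k, ∃ c : Set ℕ, A k ⊆ K c ∧ ∀ n, (c \ a (k + n)).Finite :=
    fun k => pset_K (hA k) _ fun n => (hAS k n).trans (ha1 (k + n))
  choose c hc1 hc2 using hc
  have hd : ∀ k, ∃ d : Set ℕ, B k ⊆ K d ∧ ∀ n, (d \ (a (k + n))ᶜ).Finite :=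
    fun k => pset_K (hB k) _ fun n => (hBT k n).trans (ha2 (k + n))
  choose d hd1 hd2 using hd
  have hcd : ∀ k m, (c k ∩ d m).Finite := by
    intro k m
    have h1 : (c k \ a (max k m)).Finite := by
      have := hc2 k (max k m - k)
      rwa [Nat.add_sub_cancel' (le_max_left k m)] at this
    have h2 : (d m \ (a (max k m))ᶜ).Finite := by
      have := hd2 m (max k m - m)
      rwa [Nat.add_sub_cancel' (le_max_right k m)] at this
    refine (h1.union h2).subset ?_
    rintro x ⟨hx1, hx2⟩
    by_cases hxa : x ∈ a (max k m)
    · exact Or.inr ⟨hx2, by simpa using hxa⟩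
    · exact Or.inl ⟨hx1, hxa⟩
  obtain ⟨e, he1, he2⟩ := interpolate c d hcd
  refine ⟨⟨Set.boolIndicator ((K e)ᶜ),
    (continuous_boolIndicator_iff_isClopen _).mpr (isClopen_K e).compl⟩,
    Set.mem_iInter.mpr fun n => ⟨fun t ht => ?_, fun t ht => ?_⟩⟩
  · have hte : t ∈ K e := K_mono (he1 n) (hc1 n ht)
    exact (Set.notMem_iff_boolIndicator _ _).mp (by simpa using hte)
  · have htd : t ∈ K (d n) := hd1 n ht
    have hnotin : t ∉ K e := by
      intro hteK
      have hmem : t ∈ K (e ∩ d n) := Filter.inter_mem hteK htd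
      rw [K_empty_of_finite (he2 n)] at hmem
      exact hmem
    exact (Set.mem_iff_boolIndicator _ _).mp hnotin

/-! ### Part 1: the strategy -/

def NxP (x : XP) (P : Set OmegaStar) : Set XP :=
  {x' | ∀ t ∈ P, x'.toFun t = x.toFun t}

lemma mem_NxP_self (x : XP) (P : Set OmegaStar) : x ∈ NxP x P := fun _ _ => rfl

lemma NxP_open (x : XP) {P : Set OmegaStar} (hP : P ∈ PP) : IsOpen (NxP x P) :=
  TopologicalSpace.isOpen_generateFrom_of_mem ⟨x, P, hP, rfl⟩

lemma NxP_eq_UAB (x : XP) (P : Set OmegaStar) :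
    NxP x P = UAB (P ∩ x.toFun ⁻¹' {false}) (P ∩ x.toFun ⁻¹' {true}) := by
  ext x'
  constructor
  · intro h
    exact ⟨fun t ht => (h t ht.1).trans ht.2, fun t ht => (h t ht.1).trans ht.2⟩
  · rintro ⟨h1, h2⟩ t ht
    cases hb : x.toFun t with
    | false => exact h1 t ⟨ht, hb⟩
    | true => exact h2 t ⟨ht, hb⟩

lemma exists_NxP {U : Set XP} (hU : IsOpen U) {x : XP} (hx : x ∈ U) :
    ∃ P ∈ PP, NxP x P ⊆ U := by
  have basis := TopologicalSpace.isTopologicalBasis_of_subbasis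
    (t := (inferInstance : TopologicalSpace XP)) rfl
  obtain ⟨b, ⟨f, ⟨hfin, hfsub⟩, rfl⟩, hxb, hbU⟩ := basis.exists_subset_of_mem_open hx hU
  have key : ∀ s ∈ f, ∃ P, P ∈ PP ∧ ∀ x' : XP,
      (∀ t ∈ P, x'.toFun t = x.toFun t) → x' ∈ s := by
    intro s hs
    obtain ⟨y, P, hP, rfl⟩ := hfsub hs
    have hxs : ∀ t ∈ P, x.toFun t = y.toFun t :=
      Set.mem_sInter.mp hxb _ hs
    exact ⟨P, hP, fun x' hx' t ht => (hx' t ht).trans (hxs t ht)⟩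
  choose! P hPP hPsub using key
  refine ⟨⋃ s ∈ f, P s, PP_biUnion hfin hPP, ?_⟩
  intro x' hx'
  refine hbU ?_
  intro s hs
  exact hPsub s hs x' fun t ht => hx' t (Set.mem_biUnion hs ht)

open Classical in
/-- The (non-trivial part of the) strategy. -/
noncomputable def sig0 (U : Set XP) : Set XP :=
  if h : ∃ p : XP × Set OmegaStar, p.1 ∈ U ∧ p.2 ∈ PP ∧ NxP p.1 p.2 ⊆ U then
    NxP h.choose.1 h.choose.2
  else Set.univ

lemma exists_good {U : Set XP} (hU : IsOpen U) (hne : U.Nonempty) :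
    ∃ p : XP × Set OmegaStar, p.1 ∈ U ∧ p.2 ∈ PP ∧ NxP p.1 p.2 ⊆ U := by
  obtain ⟨x, hx⟩ := hne
  obtain ⟨P, hP, hsub⟩ := exists_NxP hU hx
  exact ⟨(x, P), hx, hP, hsub⟩

lemma sig0_spec {U : Set XP}
    (h : ∃ p : XP × Set OmegaStar, p.1 ∈ U ∧ p.2 ∈ PP ∧ NxP p.1 p.2 ⊆ U) :
    ∃ p : XP × Set OmegaStar, (p.1 ∈ U ∧ p.2 ∈ PP ∧ NxP p.1 p.2 ⊆ U) ∧
      sig0 U = NxP p.1 p.2 := by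
  refine ⟨h.choose, h.choose_spec, ?_⟩
  rw [sig0, dif_pos h]

lemma head_eq (U : ℕ → Set XP) (n : ℕ) :
    ((List.range (n + 1)).reverse).map U = U n :: ((List.range n).reverse).map U := by
  simp [List.range_succ]

end Stmt12Aux

open Stmt12Aux in
theorem stmt12 :
    IsAlphaFavorable XP ∧
    ∀ A B : ℕ → Set OmegaStar, (∀ n, A n ∈ PP) → (∀ n, B n ∈ PP) →
      (∀ n, Disjoint (A n) (B n)) →
      (∀ n, (UAB (A n) (B n)).Nonempty) →
      (∀ n, UAB (A (n + 1)) (B (n + 1)) ⊆ UAB (A n) (B n)) →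
      (⋂ n, UAB (A n) (B n)).Nonempty := by
  constructor
  · refine ⟨fun l => match l with
      | [] => Set.univ
      | U :: _ => sig0 U, ?_, ?_⟩
    · intro l U hU hne
      obtain ⟨p, hp, heq⟩ := sig0_spec (exists_good hU hne)
      show IsOpen (sig0 U) ∧ (sig0 U).Nonempty ∧ sig0 U ⊆ U
      rw [heq]
      exact ⟨NxP_open _ hp.2.1, ⟨p.1, mem_NxP_self _ _⟩, hp.2.2⟩
    · intro U hUo hUne hsubσ
      have hgood := fun n => sig0_spec (exists_good (hUo n) (hUne n))
      choose p hp heq using hgood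
      set A : ℕ → Set OmegaStar :=
        fun n => (p n).2 ∩ (p n).1.toFun ⁻¹' {false} with hAdef
      set B : ℕ → Set OmegaStar :=
        fun n => (p n).2 ∩ (p n).1.toFun ⁻¹' {true} with hBdef
      have hUAB : ∀ n, UAB (A n) (B n) = sig0 (U n) :=
        fun n => by rw [heq n, NxP_eq_UAB]
      have hclopen : ∀ (n : ℕ) (b : Bool), IsClopen ((p n).1.toFun ⁻¹' {b}) :=
        fun n b => (isClopen_discrete _).preimage (p n).1.continuous_toFun
      have hsub' : ∀ n, U (n + 1) ⊆ sig0 (U n) := by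
        intro n
        have := hsubσ n
        rwa [head_eq U n] at this
      obtain ⟨x, hx⟩ := main2 A B
        (fun n => PP_inter_clopen (hp n).2.1 (hclopen n false))
        (fun n => PP_inter_clopen (hp n).2.1 (hclopen n true))
        (fun n => by
          rw [Set.disjoint_left]
          rintro t ⟨_, ht1⟩ ⟨_, ht2⟩
          rw [Set.mem_preimage, Set.mem_singleton_iff] at ht1 ht2
          rw [ht1] at ht2
          exact Bool.false_ne_true ht2)
        (fun n => ⟨(p n).1, by
          rw [show UAB (A n) (B n) = NxP (p n).1 (p n).2 from (NxP_eq_UAB _ _).symm]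
          exact mem_NxP_self _ _⟩)
        (fun n => by
          rw [hUAB n, hUAB (n + 1)]
          refine Set.Subset.trans ?_ (hsub' n)
          rw [heq (n + 1)]
          exact (hp (n + 1)).2.2)
      refine ⟨x, Set.mem_iInter.mpr fun n => ?_⟩
      have hxn : x ∈ UAB (A n) (B n) := Set.mem_iInter.mp hx n
      rw [hUAB n, heq n] at hxn
      exact (hp n).2.2 hxn
  · exact fun A B hA hB hdis hne hsub => main2 A B hA hB hdis hne hsub
end

section
/- Let Y = βℕ \ ℕ and X = C_p(Y, {0,1}). If there exists a sequence (Eₙ) of nonempty finite pairwise disjoint subsets of Y weakly converging to a point y₀ ∈ Y, then X is meagre in itself (a countable union of nowhere dense subsets). -/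
/-- `C_p(βℕ \ ℕ, {0,1})`: continuous functions to `{0,1}` (realized as `Bool`) with the
topology of pointwise convergence (the subspace topology of the product topology). -/
abbrev Cp : Type := {x : OmegaStar → Bool // Continuous x}

/-- A sequence of sets `(Aₙ)` weakly converges to `y₀` if every neighborhood of `y₀`
meets `Aₙ` for all sufficiently large `n`. -/
def WeaklyConverges {Y : Type*} [TopologicalSpace Y] (A : ℕ → Set Y) (y₀ : Y) : Prop :=
  ∀ U ∈ nhds y₀, ∃ n₀ : ℕ, ∀ n ≥ n₀, (U ∩ A n).Nonempty

/-- Two distinct ultrafilters are separated by some set. -/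
lemma exists_mem_not_mem {p q : Ultrafilter ℕ} (h : p ≠ q) : ∃ t : Set ℕ, t ∈ p ∧ t ∉ q := by
  by_contra hc
  push_neg at hc
  have hle : (q : Filter ℕ) ≤ (p : Filter ℕ) := fun t ht => hc t ht
  exact h (Ultrafilter.coe_injective (p.unique hle).symm)

open Classical in
/-- A choice of separating set for two ultrafilters. -/
noncomputable def sepSet (p q : Ultrafilter ℕ) : Set ℕ :=
  if h : ∃ t : Set ℕ, t ∈ p ∧ t ∉ q then h.choose else Set.univ

lemma sepSet_mem {p q : Ultrafilter ℕ} (h : p ≠ q) : sepSet p q ∈ p := by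
  rw [sepSet, dif_pos (exists_mem_not_mem h)]
  exact (exists_mem_not_mem h).choose_spec.1

lemma sepSet_not_mem {p q : Ultrafilter ℕ} (h : p ≠ q) : sepSet p q ∉ q := by
  rw [sepSet, dif_pos (exists_mem_not_mem h)]
  exact (exists_mem_not_mem h).choose_spec.2

/-- Given a finite set of free ultrafilters and prescribed boolean values, there is a set of
naturals belonging exactly to those prescribed `true`. -/
lemma exists_sep {P : Set OmegaStar} (hP : P.Finite) (b : OmegaStar → Bool) :
    ∃ s : Set ℕ, ∀ p ∈ P, (s ∈ p.1 ↔ b p = true) := by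
  classical
  set T : Set OmegaStar := {p ∈ P | b p = true} with hT
  set F : Set OmegaStar := {p ∈ P | b p ≠ true} with hF
  have hTfin : T.Finite := hP.subset fun p hp => hp.1
  have hFfin : F.Finite := hP.subset fun p hp => hp.1
  refine ⟨⋃ p ∈ T, ⋂ q ∈ F, sepSet p.1 q.1, fun p hp => ?_⟩
  have hne : ∀ p ∈ T, ∀ q ∈ F, p.1 ≠ q.1 := by
    intro p hp q hq h
    exact hq.2 (Subtype.ext h ▸ hp.2)
  by_cases hb : b p = true
  · simp only [hb, iff_true]
    have h1 : (⋂ q ∈ F, sepSet p.1 q.1) ∈ p.1 :=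
      (Filter.biInter_mem hFfin).mpr fun q hq => sepSet_mem (hne p ⟨hp, hb⟩ q hq)
    refine Filter.mem_of_superset h1 ?_
    exact Set.subset_biUnion_of_mem (u := fun r : OmegaStar => ⋂ q ∈ F, sepSet r.1 q.1)
      (show p ∈ T from ⟨hp, hb⟩)
  · refine iff_of_false ?_ hb
    intro hmem
    obtain ⟨r, hr, hrmem⟩ := (Ultrafilter.finite_biUnion_mem_iff hTfin).mp hmem
    have hsub : (⋂ q ∈ F, sepSet r.1 q.1) ⊆ sepSet r.1 p.1 :=
      Set.biInter_subset_of_mem (show p ∈ F from ⟨hp, hb⟩)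
    exact sepSet_not_mem (hne r hr p ⟨hp, hb⟩) (Filter.mem_of_superset hrmem hsub)

theorem stmt14 (E : ℕ → Set OmegaStar) (y₀ : OmegaStar)
    (hfin : ∀ n, (E n).Finite) (hne : ∀ n, (E n).Nonempty)
    (hdisj : Pairwise (Function.onFun Disjoint E)) (hconv : WeaklyConverges E y₀) :
    IsMeagre (Set.univ : Set Cp) := by
  classical
  -- the basic open-ish sets and the dense open sets
  set U : ℕ → Set Cp := fun k =>
    {x | (∀ p ∈ E k, x.1 p = false) ∧ ∀ p ∈ E (k + 1), x.1 p = true} with hU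
  set G : ℕ → Set Cp := fun n => ⋃ k, ⋃ (_ : n ≤ k), U k with hG
  -- evaluation maps are continuous
  have heval : ∀ p : OmegaStar, Continuous fun x : Cp => x.1 p := fun p =>
    (continuous_apply p).comp continuous_subtype_val
  -- each U k is open
  have hUopen : ∀ k, IsOpen (U k) := by
    intro k
    have : U k = (⋂ p ∈ E k, {x : Cp | x.1 p = false}) ∩
        ⋂ p ∈ E (k + 1), {x : Cp | x.1 p = true} := by
      ext x; simp [hU, Set.mem_iInter]
    rw [this]
    refine IsOpen.inter ((hfin k).isOpen_biInter fun p _ => ?_)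
      ((hfin (k + 1)).isOpen_biInter fun p _ => ?_)
    · exact isOpen_discrete {false} |>.preimage (heval p)
    · exact isOpen_discrete {true} |>.preimage (heval p)
  have hGopen : ∀ n, IsOpen (G n) :=
    fun n => isOpen_iUnion fun k => isOpen_iUnion fun _ => hUopen k
  -- each G n is dense
  have hGdense : ∀ n, Dense (G n) := by
    intro n
    rw [dense_iff_inter_open]
    rintro O hO ⟨x, hx⟩
    obtain ⟨O', hO', rfl⟩ := isOpen_induced_iff.mp hO
    obtain ⟨I, u, hu, hsub⟩ := isOpen_pi_iff.mp hO' x.1 hx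
    -- finitely many indices j with E j meeting I
    have hJ : {j : ℕ | (E j ∩ ↑I).Nonempty}.Finite := by
      have : {j : ℕ | (E j ∩ ↑I).Nonempty} ⊆ ⋃ p ∈ (I : Set OmegaStar), {j | p ∈ E j} := by
        rintro j ⟨p, hpE, hpI⟩
        exact Set.mem_biUnion hpI hpE
      refine Set.Finite.subset (Set.Finite.biUnion I.finite_toSet fun p _ => ?_) this
      refine Set.Subsingleton.finite fun j hj j' hj' => ?_
      by_contra hne'
      exact Set.disjoint_left.mp (hdisj hne') hj hj'
    obtain ⟨N, hN⟩ := hJ.bddAbove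
    set k : ℕ := max n (N + 1) with hk
    have hkn : n ≤ k := le_max_left _ _
    have hkJ : ∀ m, k ≤ m → ¬(E m ∩ ↑I).Nonempty := by
      intro m hm hmem
      have := hN hmem
      omega
    have hEkI : ∀ p ∈ (I : Set OmegaStar), p ∉ E k ∧ p ∉ E (k + 1) := by
      intro p hp
      constructor
      · exact fun h => hkJ k le_rfl ⟨p, h, hp⟩
      · exact fun h => hkJ (k + 1) (Nat.le_succ k) ⟨p, h, hp⟩
    -- prescribed values
    set b : OmegaStar → Bool := fun p =>
      if p ∈ E (k + 1) then true else if p ∈ E k then false else x.1 p with hb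
    have hPfin : ((I : Set OmegaStar) ∪ E k ∪ E (k + 1)).Finite :=
      ((I.finite_toSet.union (hfin k)).union (hfin (k + 1)))
    obtain ⟨s, hs⟩ := exists_sep hPfin b
    -- the candidate function
    have hclopen : IsClopen {u : OmegaStar | s ∈ u.1} := by
      constructor
      · exact (ultrafilter_isClosed_basic s).preimage continuous_subtype_val
      · exact (ultrafilter_isOpen_basic s).preimage continuous_subtype_val
    set y : Cp := ⟨Set.boolIndicator {u : OmegaStar | s ∈ u.1},
      (continuous_boolIndicator_iff_isClopen _).mpr hclopen⟩ with hy
    have hkey : ∀ p ∈ (I : Set OmegaStar) ∪ E k ∪ E (k + 1), y.1 p = b p := by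
      intro p hp
      have := hs p hp
      by_cases h : s ∈ p.1
      · rw [hy]
        simp only [Set.boolIndicator, Set.mem_setOf_eq, if_pos h]
        exact (this.mp h).symm
      · rw [hy]
        simp only [Set.boolIndicator, Set.mem_setOf_eq, if_neg h]
        cases hbp : b p
        · rfl
        · exact absurd (this.mpr hbp) h
    have hEkk : Disjoint (E k) (E (k + 1)) := hdisj (Nat.ne_of_lt (Nat.lt_succ_self k))
    refine ⟨y, ?_, ?_⟩
    · -- y ∈ O
      apply hsub
      intro a ha
      have haI : a ∈ (I : Set OmegaStar) := ha
      have h1 : y.1 a = x.1 a := by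
        rw [hkey a (Or.inl (Or.inl haI))]
        simp only [hb]
        rw [if_neg (hEkI a haI).2, if_neg (hEkI a haI).1]
      rw [h1]
      exact (hu a ha).2
    · -- y ∈ G n
      refine Set.mem_iUnion.mpr ⟨k, Set.mem_iUnion.mpr ⟨hkn, ?_, ?_⟩⟩
      · intro p hp
        rw [hkey p (Or.inl (Or.inr hp))]
        simp only [hb]
        rw [if_neg (Set.disjoint_left.mp hEkk hp), if_pos hp]
      · intro p hp
        rw [hkey p (Or.inr hp)]
        simp only [hb]
        rw [if_pos hp]
  -- the intersection of the G n is empty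
  have hempty : (⋂ n, G n) = (∅ : Set Cp) := by
    ext x
    simp only [Set.mem_iInter, Set.mem_empty_iff_false, iff_false]
    intro hx
    set c := x.1 y₀ with hc
    have hV : x.1 ⁻¹' {c} ∈ nhds y₀ :=
      ((isOpen_discrete {c}).preimage x.2).mem_nhds rfl
    obtain ⟨n₀, hn₀⟩ := hconv _ hV
    obtain ⟨k, hmem⟩ := Set.mem_iUnion.mp (hx n₀)
    obtain ⟨hk, hUk⟩ := Set.mem_iUnion.mp hmem
    obtain ⟨p, hpV, hpE⟩ := hn₀ k hk
    obtain ⟨q, hqV, hqE⟩ := hn₀ (k + 1) (le_trans hk (Nat.le_succ k))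
    have h1 : x.1 p = false := hUk.1 p hpE
    have h2 : x.1 q = true := hUk.2 q hqE
    have h3 : x.1 p = c := hpV
    have h4 : x.1 q = c := hqV
    rw [h1] at h3; rw [h2] at h4
    rw [← h3] at h4
    simp at h4
  -- conclude
  have hres : (⋂ n, G n) ∈ residual Cp :=
    countable_iInter_mem.mpr fun n => residual_of_dense_open (hGopen n) (hGdense n)
  rw [hempty] at hres
  rw [IsMeagre, Set.compl_univ]
  exact hres
end

section
/- Let Y = βℕ \ ℕ. If there exists a sequence (Eₙ) of nonempty finite pairwise disjoint subsets of Y weakly converging to some point y₀ ∈ Y, then there exists a sequence (Aₖ) of nonempty finite pairwise disjoint subsets of Y which weakly converges to every point of ⋃ₖ Aₖ. -/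
open Set Function Topology

namespace OmegaStarProof

/-- Free ultrafilters contain no finite sets. -/
lemma finite_not_mem {x : Ultrafilter ℕ} (hx : x ∉ Set.range (pure : ℕ → Ultrafilter ℕ))
    {s : Set ℕ} (hs : s.Finite) : s ∉ x := by
  intro h
  obtain ⟨a, -, rfl⟩ := Ultrafilter.eq_pure_of_finite_mem hs h
  exact hx ⟨a, rfl⟩

/-- The shift map on ultrafilters preserves freeness. -/
lemma shift_free {x : Ultrafilter ℕ} (hx : x ∉ Set.range (pure : ℕ → Ultrafilter ℕ)) :
    Ultrafilter.map (· + 1) x ∉ Set.range (pure : ℕ → Ultrafilter ℕ) := by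
  rintro ⟨a, ha⟩
  have h1 : ({a} : Set ℕ) ∈ Ultrafilter.map (· + 1) x := by
    rw [← ha]; exact Ultrafilter.mem_pure.mpr rfl
  rw [Ultrafilter.mem_map] at h1
  have hsub : ((· + 1) ⁻¹' {a} : Set ℕ) ⊆ {a - 1} := by
    intro n hn
    simp only [Set.mem_preimage, Set.mem_singleton_iff] at hn ⊢
    omega
  exact finite_not_mem hx ((Set.finite_singleton _).subset hsub) h1

/-- The shift map on `OmegaStar`. -/
noncomputable def sig : OmegaStar → OmegaStar :=
  fun x => ⟨Ultrafilter.map (· + 1) x.1, shift_free x.2⟩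

lemma continuous_umap : Continuous (fun x : Ultrafilter ℕ => Ultrafilter.map (· + 1) x) := by
  rw [ultrafilterBasis_is_basis.continuous_iff]
  rintro B ⟨s, rfl⟩
  have : (fun x : Ultrafilter ℕ => Ultrafilter.map (· + 1) x) ⁻¹' {u | s ∈ u}
      = {u : Ultrafilter ℕ | (· + 1) ⁻¹' s ∈ u} := by
    ext x; simp [Ultrafilter.mem_map]
  rw [this]
  exact ultrafilter_isOpen_basic _

lemma continuous_sig : Continuous sig :=
  Continuous.subtype_mk (continuous_umap.comp continuous_subtype_val) _

/-- iterates of `sig` are the shifts by `k`. -/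
lemma sig_iter_val (x : OmegaStar) : ∀ k : ℕ, (sig^[k] x).1 = Ultrafilter.map (· + k) x.1 := by
  intro k
  induction k with
  | zero =>
    simp only [Function.iterate_zero, id_eq]
    have : ((· + 0) : ℕ → ℕ) = id := by funext n; simp
    rw [this, Ultrafilter.map_id]
  | succ k ih =>
    rw [Function.iterate_succ_apply']
    have hstep : (sig (sig^[k] x)).1 = Ultrafilter.map (· + 1) (sig^[k] x).1 := rfl
    rw [hstep, ih, Ultrafilter.map_map]
    rfl

/-- No free-ultrafilter-style periodicity: shifting by a positive `k` moves every ultrafilter. -/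
lemma no_period (x : Ultrafilter ℕ) {k : ℕ} (hk : 0 < k)
    (h : Ultrafilter.map (· + k) x = x) : False := by
  set S : Set ℕ := {n | n / k % 2 = 0} with hS
  have hpre : ((· + k) ⁻¹' S : Set ℕ) = Sᶜ := by
    ext n
    simp only [Set.mem_preimage, Set.mem_compl_iff, hS, Set.mem_setOf_eq]
    rw [Nat.add_div_right _ hk]
    omega
  have h1 : S ∈ x ↔ Sᶜ ∈ x := by
    conv_lhs => rw [← h, Ultrafilter.mem_map, hpre]
  rw [Ultrafilter.compl_mem_iff_notMem] at h1
  tauto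

lemma orbit_inj (u : OmegaStar) : Function.Injective (fun n => sig^[n] u) := by
  have key : ∀ a b : ℕ, a < b → sig^[a] u ≠ sig^[b] u := by
    intro a b hab h
    have hb : b = (b - a) + a := by omega
    rw [hb, Function.iterate_add_apply] at h
    set y : OmegaStar := sig^[a] u with hy
    have hval : (sig^[b - a] y).1 = y.1 := by rw [← h]
    rw [sig_iter_val] at hval
    exact no_period y.1 (by omega) hval
  intro a b h
  by_contra hne
  rcases Nat.lt_or_ge a b with h' | h'
  · exact key a b h' h
  · exact key b a (by omega) h.symm

/-- `OmegaStar` is (the subtype of) a closed subset of the compact space `Ultrafilter ℕ`. -/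
lemma isClosed_free : IsClosed {x : Ultrafilter ℕ | x ∉ Set.range (pure : ℕ → Ultrafilter ℕ)} := by
  rw [← isOpen_compl_iff]
  have : {x : Ultrafilter ℕ | x ∉ Set.range (pure : ℕ → Ultrafilter ℕ)}ᶜ
      = ⋃ a : ℕ, {x : Ultrafilter ℕ | ({a} : Set ℕ) ∈ x} := by
    ext x
    simp only [Set.mem_compl_iff, Set.mem_setOf_eq, not_not, Set.mem_iUnion, Set.mem_range]
    constructor
    · rintro ⟨a, rfl⟩; exact ⟨a, Ultrafilter.mem_pure.mpr rfl⟩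
    · rintro ⟨a, ha⟩
      obtain ⟨b, hb, rfl⟩ := Ultrafilter.eq_pure_of_finite_mem (Set.finite_singleton a) ha
      exact ⟨b, rfl⟩
  rw [this]
  exact isOpen_iUnion fun a => ultrafilter_isOpen_basic _

noncomputable instance : CompactSpace OmegaStar :=
  isCompact_iff_compactSpace.mp isClosed_free.isCompact

noncomputable instance : Nonempty OmegaStar := by
  refine ⟨⟨Filter.hyperfilter ℕ, ?_⟩⟩
  rintro ⟨a, ha⟩
  have : ({a} : Set ℕ) ∈ Filter.hyperfilter ℕ := by
    rw [← ha]; exact Ultrafilter.mem_pure.mpr rfl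
  exact Filter.notMem_hyperfilter_of_finite (Set.finite_singleton a) this

end OmegaStarProof

open OmegaStarProof in
theorem stmt15 (E : ℕ → Set OmegaStar) (y₀ : OmegaStar)
    (hfin : ∀ n, (E n).Finite) (hne : ∀ n, (E n).Nonempty)
    (hdisj : Pairwise (Function.onFun Disjoint E)) (hconv : WeaklyConverges E y₀) :
    ∃ A : ℕ → Set OmegaStar,
      (∀ k, (A k).Finite) ∧ (∀ k, (A k).Nonempty) ∧
      Pairwise (Function.onFun Disjoint A) ∧
      ∀ y ∈ ⋃ k, A k, WeaklyConverges A y := by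
  classical
  -- the collection of nonempty closed `sig`-invariant subsets
  set C : Set (Set OmegaStar) :=
    {K | K.Nonempty ∧ IsClosed K ∧ Set.MapsTo sig K K} with hC
  have huniv : (Set.univ : Set OmegaStar) ∈ C :=
    ⟨Set.univ_nonempty, isClosed_univ, Set.mapsTo_univ _ _⟩
  -- Zorn: a minimal element of C exists
  have hzorn : ∀ c ⊆ C, IsChain (· ⊆ ·) c → c.Nonempty →
      ∃ lb ∈ C, ∀ s ∈ c, lb ⊆ s := by
    intro c hcC hchain hcne
    refine ⟨⋂₀ c, ⟨?_, ?_, ?_⟩, fun s hs => Set.sInter_subset_of_mem hs⟩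
    · -- nonempty via compactness
      have : Nonempty c := hcne.to_subtype
      have hne' := IsCompact.nonempty_iInter_of_directed_nonempty_isCompact_isClosed
        (fun s : c => (s : Set OmegaStar))
        (fun i j => by
          rcases hchain.total i.2 j.2 with h | h
          · exact ⟨i, le_refl _, h⟩
          · exact ⟨j, h, le_refl _⟩)
        (fun i => (hcC i.2).1)
        (fun i => (hcC i.2).2.1.isCompact)
        (fun i => (hcC i.2).2.1)
      rwa [Set.sInter_eq_iInter]
    · exact isClosed_sInter fun s hs => (hcC hs).2.1
    · intro x hx
      rw [Set.mem_sInter] at hx ⊢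
      exact fun s hs => (hcC hs).2.2 (hx s hs)
  obtain ⟨K, -, hKmin⟩ := zorn_superset_nonempty C hzorn Set.univ huniv
  obtain ⟨hKne, hKclosed, hKinv⟩ := hKmin.prop
  obtain ⟨u, hu⟩ := hKne
  -- orbits stay in K
  have orbit_mem : ∀ (x : OmegaStar), x ∈ K → ∀ n, sig^[n] x ∈ K := by
    intro x hx n
    induction n with
    | zero => simpa using hx
    | succ n ih => rw [Function.iterate_succ_apply']; exact hKinv ih
  -- minimality: every orbit is dense in K
  have dense_orbit : ∀ x ∈ K, closure (Set.range fun n => sig^[n] x) = K := by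
    intro x hx
    have hsub : Set.range (fun n => sig^[n] x) ⊆ K := by
      rintro - ⟨n, rfl⟩; exact orbit_mem x hx n
    have hclsub : closure (Set.range fun n => sig^[n] x) ⊆ K :=
      hKclosed.closure_subset_iff.mpr hsub
    have hmemC : closure (Set.range fun n => sig^[n] x) ∈ C := by
      refine ⟨⟨x, subset_closure ⟨0, rfl⟩⟩, isClosed_closure, ?_⟩
      intro z hz
      have h1 : sig '' closure (Set.range fun n => sig^[n] x)
          ⊆ closure (sig '' Set.range fun n => sig^[n] x) :=
        image_closure_subset_closure_image continuous_sig
      have h2 : (sig '' Set.range fun n => sig^[n] x) ⊆ Set.range fun n => sig^[n] x := by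
        rintro - ⟨-, ⟨n, rfl⟩, rfl⟩
        exact ⟨n + 1, by simp only [Function.iterate_succ_apply']⟩
      exact closure_mono h2 (h1 ⟨z, hz, rfl⟩)
    exact le_antisymm hclsub (hKmin.2 hmemC hclsub)
  -- syndeticity of visit times to open sets meeting K
  have syndetic : ∀ V : Set OmegaStar, IsOpen V → (V ∩ K).Nonempty →
      ∃ N, ∀ x ∈ K, ∃ n ≤ N, sig^[n] x ∈ V := by
    intro V hV ⟨z, hzV, hzK⟩
    have hcover : K ⊆ ⋃ n : ℕ, (sig^[n]) ⁻¹' V := by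
      intro x hx
      have hzc : z ∈ closure (Set.range fun n => sig^[n] x) := by
        rw [dense_orbit x hx]; exact hzK
      obtain ⟨w, hwV, hw⟩ := mem_closure_iff.mp hzc V hV hzV
      obtain ⟨n, rfl⟩ := hw
      exact Set.mem_iUnion.mpr ⟨n, hwV⟩
    obtain ⟨t, ht⟩ := hKclosed.isCompact.elim_finite_subcover
      (fun n : ℕ => (sig^[n]) ⁻¹' V) (fun n => hV.preimage (continuous_sig.iterate n)) hcover
    refine ⟨t.sup id, fun x hx => ?_⟩
    obtain ⟨n, hnt, hxn⟩ := Set.mem_iUnion₂.mp (ht hx)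
    exact ⟨n, Finset.le_sup (f := id) hnt, hxn⟩
  -- the sequence of sets: orbit segments over the intervals [k², (k+1)²)
  set A : ℕ → Set OmegaStar :=
    fun k => (fun n => sig^[n] u) '' Set.Ico (k * k) ((k + 1) * (k + 1)) with hA
  have hsq : ∀ k : ℕ, k * k < (k + 1) * (k + 1) := fun k => by nlinarith
  refine ⟨A, ?_, ?_, ?_, ?_⟩
  · exact fun k => (Set.finite_Ico _ _).image _
  · exact fun k => ⟨sig^[k * k] u, ⟨k * k, ⟨le_refl _, hsq k⟩, rfl⟩⟩
  · -- pairwise disjoint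
    have key : ∀ k l : ℕ, k < l → Disjoint (A k) (A l) := by
      intro k l hkl
      rw [hA]
      rw [Set.disjoint_image_iff (orbit_inj u)]
      have h1 : (k + 1) * (k + 1) ≤ l * l := Nat.mul_le_mul (by omega) (by omega)
      rw [Set.disjoint_left]
      rintro n ⟨-, h2⟩ ⟨h3, -⟩
      omega
    intro k l hkl
    rcases Nat.lt_or_ge k l with h | h
    · exact key k l h
    · exact (key l k (by omega)).symm
  · -- weak convergence to every point of the union
    have hmain : ∀ y ∈ K, WeaklyConverges A y := by
      intro y hy U hU
      obtain ⟨V, hVU, hVopen, hyV⟩ := mem_nhds_iff.mp hU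
      obtain ⟨N, hN⟩ := syndetic V hVopen ⟨y, hyV, hy⟩
      refine ⟨N, fun k hk => ?_⟩
      obtain ⟨d, hdN, hd⟩ := hN (sig^[k * k] u) (orbit_mem u hu (k * k))
      rw [← Function.iterate_add_apply] at hd
      refine ⟨sig^[d + k * k] u, hVU hd, ?_⟩
      refine ⟨d + k * k, ⟨by omega, ?_⟩, rfl⟩
      have := hsq k
      nlinarith
    intro y hy
    apply hmain
    obtain ⟨-, ⟨k, rfl⟩, hyk⟩ := hy
    obtain ⟨n, -, rfl⟩ := hyk
    exact orbit_mem u hu n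
end
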